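/- arXiv:2212.14082 — 11 statements merged into one kernel-verified Lean document; each statement's English description precedes it below -/
import Mathlib

section
/- For every connected finite simple graph G, the majority dominator chromatic number satisfies χ_md(G) ≤ χ(G) + ⌈α(G)/2⌉ − 1, where χ(G) is the chromatic number and α(G) is the independence number. -/
open SimpleGraph

/-- A majority dominator coloring: a proper coloring such that every vertex `v`
dominates at least half of some (nonempty) color class, i.e. there is a color class `C`
with `|C| ≤ 2 * |C ∩ N[v]|`. -/
def SimpleGraph.IsMajorityDominatorColoring {V : Type*} (G : SimpleGraph V) {k : ℕ}
    (c : V → Fin k) : Prop :=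
  (∀ u v, G.Adj u v → c u ≠ c v) ∧
  ∀ v : V, ∃ i : Fin k,
    {u | c u = i}.Nonempty ∧
    {u | c u = i}.ncard ≤ 2 * {u | c u = i ∧ (u = v ∨ G.Adj v u)}.ncard

/-- The majority dominator chromatic number. -/
noncomputable def SimpleGraph.majorityDominatorChromaticNumber {V : Type*}
    (G : SimpleGraph V) : ℕ :=
  sInf {k | ∃ c : V → Fin k, G.IsMajorityDominatorColoring c}

/-- The independence number: largest size of an independent set. -/
noncomputable def SimpleGraph.indepNum' {V : Type*} (G : SimpleGraph V) : ℕ :=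
  sSup {k | ∃ s : Finset V, s.card = k ∧ ∀ u ∈ s, ∀ w ∈ s, ¬ G.Adj u w}

theorem md_le_chromatic_add_half_indep {V : Type*} [Fintype V] (G : SimpleGraph V)
    (hG : G.Connected) :
    G.majorityDominatorChromaticNumber ≤
      G.chromaticNumber.toNat + (G.indepNum' + 1) / 2 - 1 := by
  classical
  obtain ⟨v0⟩ := hG.nonempty
  set n := G.chromaticNumber.toNat with hn
  obtain ⟨C⟩ := G.colorable_chromaticNumber_of_fintype
  have hn1 : 1 ≤ n := by
    have := (C v0).isLt
    omega
  obtain ⟨m, hm⟩ : ∃ m, n = m + 1 := ⟨n - 1, (Nat.succ_pred_eq_of_pos hn1).symm⟩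
  -- the color class of the last color
  set V1 : Finset V := Finset.univ.filter (fun v => (C v).val = m) with hV1def
  set Fam : Set (Finset V) := {t | V1 ⊆ t ∧ ∀ u ∈ t, ∀ w ∈ t, ¬ G.Adj u w} with hFamdef
  have hV1Fam : V1 ∈ Fam := by
    refine ⟨subset_rfl, fun u hu w hw hadj => ?_⟩
    simp only [hV1def, Finset.mem_filter] at hu hw
    exact C.valid hadj (Fin.ext (hu.2.trans hw.2.symm))
  obtain ⟨S, hSFam, hSmax⟩ :=
    Set.Finite.exists_maximalFor Finset.card Fam (Set.toFinite _) ⟨V1, hV1Fam⟩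
  obtain ⟨hV1S, hSind⟩ := hSFam
  -- S is a maximal independent set
  have hdom : ∀ v, v ∉ S → ∃ s ∈ S, G.Adj v s := by
    intro v hv
    by_contra h
    push_neg at h
    have hins : insert v S ∈ Fam := by
      refine ⟨hV1S.trans (Finset.subset_insert v S), fun u hu w hw hadj => ?_⟩
      rcases Finset.mem_insert.1 hu with h1 | hu' <;>
        rcases Finset.mem_insert.1 hw with h2 | hw'
      · subst h1; subst h2; exact G.loopless.irrefl _ hadj
      · subst h1; exact h w hw' hadj
      · subst h2; exact h u hu' hadj.symm
      · exact hSind u hu' w hw' hadj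
    have hc := hSmax hins (Finset.card_le_card (Finset.subset_insert v S))
    rw [Finset.card_insert_of_notMem hv] at hc
    omega
  have hCv : ∀ v, v ∉ S → (C v).val < m := by
    intro v hv
    have h1 : (C v).val ≠ m := fun h => hv (hV1S (by simp [hV1def, h]))
    have h2 := (C v).isLt
    omega
  set M := S.card with hM
  set e := S.equivFin with he
  set K := m + (M + 1) / 2 with hK
  -- the majority dominator coloring
  have hboundS : ∀ (v : V) (h : v ∈ S), m + (e ⟨v, h⟩).val / 2 < K := by
    intro v h
    have := (e ⟨v, h⟩).isLt
    simp only [hK]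
    omega
  have hboundC : ∀ (v : V), v ∉ S → (C v).val < K := by
    intro v h
    have := hCv v h
    simp only [hK]
    omega
  set c : V → Fin K := fun v =>
    if h : v ∈ S then ⟨m + (e ⟨v, h⟩).val / 2, hboundS v h⟩
    else ⟨(C v).val, hboundC v h⟩ with hc
  have hcS : ∀ (v : V) (h : v ∈ S), (c v).val = m + (e ⟨v, h⟩).val / 2 := by
    intro v h; simp [hc, h]
  have hcN : ∀ (v : V), v ∉ S → (c v).val = (C v).val := by
    intro v h; simp [hc, h]
  -- membership in the class forces membership in S when the color is an S-color
  have hclassS : ∀ (s : V) (hs : s ∈ S) (u : V), c u = c s → u ∈ S := by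
    intro s hs u hu
    by_contra h
    have h1 := hcN u h
    have h2 := hcS s hs
    have h3 := hCv u h
    have : (c u).val = (c s).val := by rw [hu]
    omega
  -- each S-color class has at most 2 elements
  have hsmall : ∀ (s : V) (hs : s ∈ S), {u | c u = c s}.ncard ≤ 2 := by
    intro s hs
    set d := (e ⟨s, hs⟩).val / 2 with hd
    set f : V → ℕ := fun u => if h : u ∈ S then (e ⟨u, h⟩).val else 0 with hf
    have hmem : ∀ u ∈ {u | c u = c s}, f u ∈ ({2 * d, 2 * d + 1} : Set ℕ) := by
      intro u hu
      have huS : u ∈ S := hclassS s hs u hu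
      have h1 : (c u).val = (c s).val := by rw [hu]
      rw [hcS u huS, hcS s hs] at h1
      have h2 : (e ⟨u, huS⟩).val / 2 = d := by omega
      have : f u = (e ⟨u, huS⟩).val := by simp [hf, huS]
      rw [this]
      have h3 : (e ⟨u, huS⟩).val = 2 * d ∨ (e ⟨u, huS⟩).val = 2 * d + 1 := by omega
      rcases h3 with h3 | h3
      · left; exact h3
      · right; exact h3
    have hinj : Set.InjOn f {u | c u = c s} := by
      intro u hu w hw hfuw
      have huS : u ∈ S := hclassS s hs u hu
      have hwS : w ∈ S := hclassS s hs w hw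
      simp only [hf, dif_pos huS, dif_pos hwS] at hfuw
      have : e ⟨u, huS⟩ = e ⟨w, hwS⟩ := Fin.ext hfuw
      have := e.injective this
      exact congrArg Subtype.val this
    calc {u | c u = c s}.ncard ≤ ({2 * d, 2 * d + 1} : Set ℕ).ncard :=
          Set.ncard_le_ncard_of_injOn f hmem hinj (Set.toFinite _)
      _ ≤ 2 := le_trans (Set.ncard_insert_le _ _) (by simp)
  have hone : ∀ (v s : V), s ∈ {u | c u = c s ∧ (u = v ∨ G.Adj v u)} →
      1 ≤ {u | c u = c s ∧ (u = v ∨ G.Adj v u)}.ncard :=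
    fun v s h => (Set.ncard_pos (Set.toFinite _)).2 ⟨s, h⟩
  -- the coloring is a majority dominator coloring
  have hMD : G.IsMajorityDominatorColoring c := by
    constructor
    · intro u v hadj h
      have hval : (c u).val = (c v).val := by rw [h]
      by_cases hu : u ∈ S <;> by_cases hv : v ∈ S
      · exact hSind u hu v hv hadj
      · have := hcS u hu; have := hcN v hv; have := hCv v hv; omega
      · have := hcN u hu; have := hcS v hv; have := hCv u hu; omega
      · rw [hcN u hu, hcN v hv] at hval
        exact C.valid hadj (Fin.ext hval)
    · intro v
      by_cases hv : v ∈ S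
      · refine ⟨c v, ⟨v, rfl⟩, ?_⟩
        have h1 := hone v v ⟨rfl, Or.inl rfl⟩
        have h2 := hsmall v hv
        omega
      · obtain ⟨s, hs, hadj⟩ := hdom v hv
        refine ⟨c s, ⟨s, rfl⟩, ?_⟩
        have h1 := hone v s ⟨rfl, Or.inr hadj⟩
        have h2 := hsmall s hs
        omega
  -- conclude
  have hKmem : K ∈ {k | ∃ c : V → Fin k, G.IsMajorityDominatorColoring c} := ⟨c, hMD⟩
  have hinf : G.majorityDominatorChromaticNumber ≤ K := Nat.sInf_le hKmem
  have hMα : M ≤ G.indepNum' := by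
    apply le_csSup
    · exact ⟨Fintype.card V, fun k hk => by
        obtain ⟨s, rfl, _⟩ := hk; exact s.card_le_univ.trans_eq (Finset.card_univ)⟩
    · exact ⟨S, rfl, hSind⟩
  have : K ≤ n + (G.indepNum' + 1) / 2 - 1 := by
    have hdiv : (M + 1) / 2 ≤ (G.indepNum' + 1) / 2 :=
      Nat.div_le_div_right (by omega)
    simp only [hK]
    omega
  exact hinf.trans this
end

section
/- Let G be a connected finite simple graph of order n ≥ 2, let I be an independent set in G, and let M be a matching in the complement of the induced subgraph G[V(G)\I]. Then χ_md(G) ≤ n − |M| − |I| + 1. -/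
open SimpleGraph

/-!
Colour `I` with one colour, each pair `(a, b)` of `M` with one colour (`a` and `b` are
non-adjacent), and every other vertex with a colour of its own. This uses at
most `n - |M| - |I| + 1` colours, and every colour class outside `I` has at most two vertices.
Each vertex has a closed neighbour outside `I` (itself, or any neighbour if it lies in the
independent set `I`, which exists by connectivity), and it dominates at least half of that
neighbour's class.
-/

namespace SimpleGraph

variable {V : Type*} {G : SimpleGraph V}

theorem isMajorityDominatorColoring_of_ncard_le_two [Finite V] {k : ℕ} {c : V → Fin k}
    (hproper : ∀ u v, G.Adj u v → c u ≠ c v)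
    (hsmall : ∀ v, ∃ w, (w = v ∨ G.Adj v w) ∧ {u | c u = c w}.ncard ≤ 2) :
    G.IsMajorityDominatorColoring c := by
  refine ⟨hproper, fun v => ?_⟩
  obtain ⟨w, hwv, hw⟩ := hsmall v
  have hpos : 0 < {u | c u = c w ∧ (u = v ∨ G.Adj v u)}.ncard :=
    (Set.ncard_pos (Set.toFinite _)).mpr ⟨w, rfl, hwv⟩
  exact ⟨c w, ⟨w, rfl⟩, by omega⟩

theorem majorityDominatorChromaticNumber_le_card_image [Fintype V] {α : Type*} [DecidableEq α]
    (f : V → α) (hproper : ∀ u v, G.Adj u v → f u ≠ f v)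
    (hsmall : ∀ v, ∃ w, (w = v ∨ G.Adj v w) ∧ {u | f u = f w}.ncard ≤ 2) :
    G.majorityDominatorChromaticNumber ≤ (Finset.univ.image f).card := by
  set S := Finset.univ.image f
  let c : V → Fin S.card := fun v =>
    S.equivFin ⟨f v, Finset.mem_image_of_mem f (Finset.mem_univ v)⟩
  have hc : ∀ u v, c u = c v ↔ f u = f v := fun u v => by
    simp only [c, EmbeddingLike.apply_eq_iff_eq, Subtype.mk.injEq]
  refine Nat.sInf_le ⟨c, isMajorityDominatorColoring_of_ncard_le_two
    (fun u v huv h => hproper u v huv ((hc u v).1 h)) fun v => ?_⟩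
  obtain ⟨w, hwv, hw⟩ := hsmall v
  exact ⟨w, hwv, by simpa only [hc] using hw⟩

theorem Connected.exists_eq_or_adj_notMem [Nontrivial V] (hG : G.Connected) {I : Set V}
    (hI : ∀ u ∈ I, ∀ w ∈ I, ¬ G.Adj u w) (v : V) : ∃ w, (w = v ∨ G.Adj v w) ∧ w ∉ I := by
  by_cases hv : v ∈ I
  · obtain ⟨w, hw⟩ := hG.preconnected.exists_adj_of_nontrivial v
    exact ⟨w, Or.inr hw, fun hwI => hI v hv w hwI hw⟩
  · exact ⟨v, Or.inl rfl, hv⟩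

end SimpleGraph

section MatchingColoring

variable {V : Type*} (I : Finset V) (M : Finset (V × V))

open Classical in
noncomputable def matchingColoring (v : V) : Option V :=
  if v ∈ I then none else some (if h : ∃ p ∈ M, p.2 = v then h.choose.1 else v)

variable {I M}

theorem matchingColoring_eq_none_iff {v : V} : matchingColoring I M v = none ↔ v ∈ I := by
  unfold matchingColoring
  split_ifs with h <;> simp [h]

theorem eq_or_mem_of_matchingColoring_eq_some {v x : V} (h : matchingColoring I M v = some x) :
    v = x ∨ (x, v) ∈ M := by
  unfold matchingColoring at h
  split_ifs at h with hI hM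
  · obtain ⟨hp, hpv⟩ := hM.choose_spec
    cases h
    exact Or.inr ((Prod.ext rfl hpv.symm : (_, v) = hM.choose) ▸ hp)
  · exact Or.inl (Option.some_inj.mp h)

theorem notMem_of_matchingColoring_eq_some (hfstI : ∀ p ∈ M, p.1 ∉ I)
    (hfst_snd : ∀ p ∈ M, ∀ q ∈ M, p.1 ≠ q.2) {v x : V} (h : matchingColoring I M v = some x) :
    x ∉ I ∧ ∀ q ∈ M, q.2 ≠ x := by
  unfold matchingColoring at h
  split_ifs at h with hI hM
  · obtain ⟨hp, -⟩ := hM.choose_spec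
    cases h
    exact ⟨hfstI _ hp, fun q hq => (hfst_snd _ hp q hq).symm⟩
  · cases h
    exact ⟨hI, fun q hq hqv => hM ⟨q, hq, hqv⟩⟩

theorem ncard_matchingColoring_fiber_le_two [Finite V]
    (hfst : Set.InjOn Prod.fst (M : Set (V × V))) {w : V} (hw : w ∉ I) :
    {u | matchingColoring I M u = matchingColoring I M w}.ncard ≤ 2 := by
  obtain ⟨x, hx⟩ := Option.ne_none_iff_exists'.mp (matchingColoring_eq_none_iff.not.mpr hw)
  have hpartner : {u | (x, u) ∈ M}.ncard ≤ 1 :=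
    (Set.ncard_le_one (Set.toFinite _)).mpr fun a ha b hb =>
      congrArg Prod.snd (hfst ha hb rfl)
  calc {u | matchingColoring I M u = matchingColoring I M w}.ncard
      ≤ (insert x {u | (x, u) ∈ M}).ncard := by
        refine Set.ncard_le_ncard (fun u hu => ?_) (Set.toFinite _)
        rw [Set.mem_ofPred_eq, hx] at hu
        exact eq_or_mem_of_matchingColoring_eq_some hu
    _ ≤ 2 := (Set.ncard_insert_le _ _).trans (by omega)

theorem matchingColoring_ne_of_adj {G : SimpleGraph V} (hI : ∀ u ∈ I, ∀ w ∈ I, ¬ G.Adj u w)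
    (hfst : Set.InjOn Prod.fst (M : Set (V × V))) (hM : ∀ p ∈ M, ¬ G.Adj p.1 p.2)
    {u v : V} (huv : G.Adj u v) : matchingColoring I M u ≠ matchingColoring I M v := by
  intro h
  cases hu : matchingColoring I M u with
  | none =>
    rw [hu, eq_comm, matchingColoring_eq_none_iff] at h
    exact hI u (matchingColoring_eq_none_iff.mp hu) v h huv
  | some x =>
    rw [hu, eq_comm] at h
    rcases eq_or_mem_of_matchingColoring_eq_some hu with rfl | hxu <;>
      rcases eq_or_mem_of_matchingColoring_eq_some h with rfl | hxv
    · exact huv.ne rfl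
    · exact hM _ hxv huv
    · exact hM _ hxu huv.symm
    · exact huv.ne (congrArg Prod.snd (hfst hxu hxv rfl))

theorem card_image_matchingColoring_le [Fintype V] [DecidableEq V]
    (hfstI : ∀ p ∈ M, p.1 ∉ I) (hsndI : ∀ p ∈ M, p.2 ∉ I)
    (hsnd : Set.InjOn Prod.snd (M : Set (V × V))) (hfst_snd : ∀ p ∈ M, ∀ q ∈ M, p.1 ≠ q.2) :
    (Finset.univ.image (matchingColoring I M)).card ≤
      Fintype.card V - (I.card + M.card) + 1 := by
  set free := Finset.univ \ (I ∪ M.image Prod.snd)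
  have hsub : Finset.univ.image (matchingColoring I M) ⊆ insert none (free.image some) := by
    intro y hy
    obtain ⟨v, -, rfl⟩ := Finset.mem_image.mp hy
    cases hv : matchingColoring I M v with
    | none => exact Finset.mem_insert_self _ _
    | some x =>
      obtain ⟨hxI, hxM⟩ := notMem_of_matchingColoring_eq_some hfstI hfst_snd hv
      refine Finset.mem_insert_of_mem (Finset.mem_image_of_mem some ?_)
      simp only [free, Finset.mem_sdiff, Finset.mem_union, Finset.mem_image]
      refine ⟨Finset.mem_univ x, ?_⟩
      rintro (hx | ⟨q, hq, hqx⟩)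
      exacts [hxI hx, hxM q hq hqx]
  have hdisj : Disjoint I (M.image Prod.snd) := Finset.disjoint_right.mpr <| by
    intro x hx
    obtain ⟨p, hp, rfl⟩ := Finset.mem_image.mp hx
    exact hsndI p hp
  have hfree : free.card = Fintype.card V - (I.card + M.card) := by
    rw [Finset.card_univ_sdiff, Finset.card_union_of_disjoint hdisj,
      Finset.card_image_of_injOn hsnd]
  calc (Finset.univ.image (matchingColoring I M)).card ≤ (insert none (free.image some)).card :=
        Finset.card_le_card hsub
    _ ≤ free.card + 1 := (Finset.card_insert_le _ _).trans (by grw [Finset.card_image_le])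
    _ = _ := by rw [hfree]

end MatchingColoring

theorem md_le_card_sub_matching_sub_indep {V : Type*} [Fintype V] [DecidableEq V]
    (G : SimpleGraph V) (hG : G.Connected) (hn : 2 ≤ Fintype.card V)
    (I : Finset V) (hI : ∀ u ∈ I, ∀ w ∈ I, ¬ G.Adj u w)
    (M : Finset (V × V))
    -- M is a matching in the complement of the subgraph induced on V \ I:
    (hMadj : ∀ p ∈ M, p.1 ∉ I ∧ p.2 ∉ I ∧ p.1 ≠ p.2 ∧ ¬ G.Adj p.1 p.2)
    (hMdisj : ∀ p ∈ M, ∀ q ∈ M, p ≠ q →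
      p.1 ≠ q.1 ∧ p.1 ≠ q.2 ∧ p.2 ≠ q.1 ∧ p.2 ≠ q.2) :
    G.majorityDominatorChromaticNumber ≤ Fintype.card V - M.card - I.card + 1 := by
  have : Nontrivial V := Fintype.one_lt_card_iff_nontrivial.mp hn
  have hfst : Set.InjOn Prod.fst (M : Set (V × V)) := fun p hp q hq h =>
    not_imp_comm.mp (hMdisj p hp q hq) fun hne => hne.1 h
  have hsnd : Set.InjOn Prod.snd (M : Set (V × V)) := fun p hp q hq h =>
    not_imp_comm.mp (hMdisj p hp q hq) fun hne => hne.2.2.2 h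
  have hfst_snd : ∀ p ∈ M, ∀ q ∈ M, p.1 ≠ q.2 := fun p hp q hq => by
    obtain rfl | hpq := eq_or_ne p q
    exacts [(hMadj p hp).2.2.1, (hMdisj p hp q hq hpq).2.1]
  calc G.majorityDominatorChromaticNumber
      ≤ (Finset.univ.image (matchingColoring I M)).card :=
        majorityDominatorChromaticNumber_le_card_image _
          (fun u v => matchingColoring_ne_of_adj hI hfst fun p hp => (hMadj p hp).2.2.2)
          fun v => by
            obtain ⟨w, hwv, hw⟩ := hG.exists_eq_or_adj_notMem (I := ↑I) hI v
            exact ⟨w, hwv, ncard_matchingColoring_fiber_le_two hfst hw⟩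
    _ ≤ Fintype.card V - (I.card + M.card) + 1 := card_image_matchingColoring_le
        (fun p hp => (hMadj p hp).1) (fun p hp => (hMadj p hp).2.1) hsnd hfst_snd
    _ = Fintype.card V - M.card - I.card + 1 := by omega
end

section
/- Let G be a connected finite simple graph of order n ≥ 2 and let I be a maximum independent set in G. Then χ_md(G) ≤ n + 1 − α(G) − ν(complement of G[V(G)\I]), where ν denotes the matching number. -/
open SimpleGraph

/-- The matching number: largest size of a matching. -/
noncomputable def SimpleGraph.matchingNum' {V : Type*} (G : SimpleGraph V) : ℕ :=
  sSup {k | ∃ M : Finset (V × V), M.card = k ∧ (∀ p ∈ M, G.Adj p.1 p.2) ∧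
    ∀ p ∈ M, ∀ q ∈ M, p ≠ q → p.1 ≠ q.1 ∧ p.1 ≠ q.2 ∧ p.2 ≠ q.1 ∧ p.2 ≠ q.2}

theorem md_le_card_add_one_sub_indep_sub_matching {V : Type*} [Fintype V] [DecidableEq V]
    (G : SimpleGraph V) (hG : G.Connected) (hn : 2 ≤ Fintype.card V)
    (I : Finset V) (hI : ∀ u ∈ I, ∀ w ∈ I, ¬ G.Adj u w)
    (hImax : I.card = G.indepNum') :
    G.majorityDominatorChromaticNumber ≤
      Fintype.card V + 1 - G.indepNum' -
        ((G.induce ((I : Set V)ᶜ))ᶜ).matchingNum' := by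
  classical
  set n := Fintype.card V with hn_def
  set H := (G.induce ((I : Set V)ᶜ))ᶜ with hH
  haveI : Fintype ↥((I : Set V)ᶜ) := Fintype.ofFinite _
  -- I is nonempty
  have hIcard_le : I.card ≤ n := by simpa using Finset.card_le_univ I
  have hVne : Nonempty V := Fintype.card_pos_iff.mp (by omega)
  obtain ⟨x0⟩ := hVne
  have h1le : 1 ≤ I.card := by
    rw [hImax]
    have hbddI : BddAbove {k | ∃ s : Finset V, s.card = k ∧ ∀ u ∈ s, ∀ w ∈ s, ¬ G.Adj u w} := by
      refine ⟨n, fun k hk => ?_⟩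
      obtain ⟨s, rfl, -⟩ := hk
      simpa using Finset.card_le_univ s
    refine le_csSup hbddI ⟨{x0}, by simp, ?_⟩
    intro u hu w hw
    simp only [Finset.mem_singleton] at hu hw
    subst hu; subst hw; exact G.loopless.irrefl _
  have hIne : I.Nonempty := Finset.card_pos.mp (by omega)
  obtain ⟨v0, hv0⟩ := hIne
  -- extract a maximum matching M of H
  have hmem : H.matchingNum' ∈ {k | ∃ M : Finset (↥((I : Set V)ᶜ) × ↥((I : Set V)ᶜ)),
      M.card = k ∧ (∀ p ∈ M, H.Adj p.1 p.2) ∧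
      ∀ p ∈ M, ∀ q ∈ M, p ≠ q → p.1 ≠ q.1 ∧ p.1 ≠ q.2 ∧ p.2 ≠ q.1 ∧ p.2 ≠ q.2} := by
    apply Nat.sSup_mem
    · exact ⟨0, ∅, by simp, by simp, by simp⟩
    · refine ⟨Fintype.card (↥((I : Set V)ᶜ) × ↥((I : Set V)ᶜ)), fun k hk => ?_⟩
      obtain ⟨M, rfl, -⟩ := hk
      simpa using Finset.card_le_univ M
  obtain ⟨M, hMcard, hMadj, hMdisj⟩ := hmem
  -- basic facts about the matching
  have huniq1 : ∀ p ∈ M, ∀ q ∈ M, p.1 = q.1 → p = q := by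
    intro p hp q hq h
    by_contra hne
    exact (hMdisj p hp q hq hne).1 h
  have huniq2 : ∀ p ∈ M, ∀ q ∈ M, p.2 = q.2 → p = q := by
    intro p hp q hq h
    by_contra hne
    exact (hMdisj p hp q hq hne).2.2.2 h
  have hne12 : ∀ p ∈ M, p.1 ≠ p.2 := fun p hp => (hMadj p hp).ne
  have h12 : ∀ p ∈ M, ∀ q ∈ M, (p.1 : V) ≠ (q.2 : V) := by
    intro p hp q hq h
    by_cases hpq : p = q
    · exact hne12 p hp (by rw [hpq] at h ⊢; exact Subtype.ext h)
    · exact (hMdisj p hp q hq hpq).2.1 (Subtype.ext h)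
  have hnadj : ∀ p ∈ M, ¬ G.Adj (p.1 : V) (p.2 : V) := by
    intro p hp hadj
    have := hMadj p hp
    rw [hH, compl_adj] at this
    exact this.2 hadj
  -- membership facts
  have hmemc : ∀ p ∈ M, ((p.1 : V) ∉ I) ∧ ((p.2 : V) ∉ I) := by
    intro p _
    refine ⟨fun h => p.1.2 (by simpa using h), fun h => p.2.2 (by simpa using h)⟩
  -- define the representative map
  set rep : V → V := fun v =>
    if v ∈ I then v0
    else if h : ∃ p ∈ M, ((p.2 : V)) = v then h.choose.1 else v with hrep_def
  have hrepI : ∀ v ∈ I, rep v = v0 := by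
    intro v hv; simp only [hrep_def, if_pos hv]
  have hrep_spec : ∀ v, v ∉ I →
      (∃ p ∈ M, (p.2 : V) = v ∧ rep v = (p.1 : V)) ∨
      ((∀ p ∈ M, (p.2 : V) ≠ v) ∧ rep v = v) := by
    intro v hv
    by_cases h : ∃ p ∈ M, ((p.2 : V)) = v
    · left
      refine ⟨h.choose, h.choose_spec.1, h.choose_spec.2, ?_⟩
      simp only [hrep_def, if_neg hv, dif_pos h]
    · right
      have h' := h
      push_neg at h'
      exact ⟨h', by simp only [hrep_def, if_neg hv, dif_neg h]⟩
  have hrepR : ∀ v, v ∉ I → rep v ∉ I := by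
    intro v hv
    rcases hrep_spec v hv with ⟨p, hp, -, hr⟩ | ⟨-, hr⟩
    · rw [hr]; exact (hmemc p hp).1
    · rw [hr]; exact hv
  -- properness of fibers
  have hproper : ∀ u w, G.Adj u w → rep u ≠ rep w := by
    intro u w hadj heq
    by_cases huI : u ∈ I <;> by_cases hwI : w ∈ I
    · exact hI u huI w hwI hadj
    · rw [hrepI u huI] at heq
      exact hrepR w hwI (heq ▸ hv0)
    · rw [hrepI w hwI] at heq
      exact hrepR u huI (heq.symm ▸ hv0)
    · rcases hrep_spec u huI with ⟨p, hp, hp2, hru⟩ | ⟨-, hru⟩ <;>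
        rcases hrep_spec w hwI with ⟨q, hq, hq2, hrw⟩ | ⟨-, hrw⟩
      · rw [hru, hrw] at heq
        have : p = q := huniq1 p hp q hq (Subtype.ext heq)
        rw [← hp2, ← hq2, this] at hadj
        exact hadj.ne rfl
      · rw [hru, hrw] at heq
        rw [← hp2, ← heq] at hadj
        exact hnadj p hp hadj.symm
      · rw [hru, hrw] at heq
        rw [← hq2, heq] at hadj
        exact hnadj q hq hadj
      · rw [hru, hrw] at heq
        exact hadj.ne heq
  -- small fibers on the complement of I
  have hfiber : ∀ u, u ∉ I → ∃ w, ∀ x, rep x = rep u → x = u ∨ x = w := by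
    intro u hu
    have hrepuI : rep u ∉ I := hrepR u hu
    rcases hrep_spec u hu with ⟨p, hp, hp2, hru⟩ | ⟨hnp, hru⟩
    · refine ⟨(p.1 : V), fun x hx => ?_⟩
      by_cases hxI : x ∈ I
      · exfalso; apply hrepuI; rw [← hx, hrepI x hxI]; exact hv0
      · rcases hrep_spec x hxI with ⟨q, hq, hq2, hrx⟩ | ⟨-, hrx⟩
        · rw [hrx, hru] at hx
          have : q = p := huniq1 q hq p hp (Subtype.ext hx)
          left; rw [← hq2, this, hp2]
        · right; rw [← hrx, hx, hru]
    · by_cases hq : ∃ q ∈ M, ((q.1 : V)) = u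
      · refine ⟨(hq.choose.2 : V), fun x hx => ?_⟩
        rw [hru] at hx
        by_cases hxI : x ∈ I
        · exfalso; apply hu; rw [← hx, hrepI x hxI]; exact hv0
        · rcases hrep_spec x hxI with ⟨q', hq', hq'2, hrx⟩ | ⟨-, hrx⟩
          · rw [hrx] at hx
            have : q' = hq.choose :=
              huniq1 q' hq' hq.choose hq.choose_spec.1
                (Subtype.ext (hx.trans hq.choose_spec.2.symm))
            right; rw [← hq'2, this]
          · left; rw [← hrx, hx]
      · refine ⟨u, fun x hx => ?_⟩
        rw [hru] at hx
        by_cases hxI : x ∈ I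
        · exfalso; apply hu; rw [← hx, hrepI x hxI]; exact hv0
        · rcases hrep_spec x hxI with ⟨q', hq', hq'2, hrx⟩ | ⟨-, hrx⟩
          · exact absurd ⟨q', hq', hrx ▸ hx⟩ hq
          · left; rw [← hrx, hx]
  -- count the image of rep
  set secondCoords : Finset V := M.image (fun p => ((p.2 : V))) with hsc
  have hsc_card : secondCoords.card = M.card := by
    rw [hsc]
    apply Finset.card_image_of_injOn
    intro p hp q hq h
    exact huniq2 p hp q hq (Subtype.ext h)
  have hsc_sub : secondCoords ⊆ Iᶜ := by
    intro a ha
    rw [hsc] at ha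
    obtain ⟨p, hp, rfl⟩ := Finset.mem_image.mp ha
    exact Finset.mem_compl.mpr (hmemc p hp).2
  have hcompl_card : (Iᶜ : Finset V).card = n - I.card := by
    simp [Finset.card_compl, hn_def]
  have hM_le : M.card ≤ n - I.card := by
    rw [← hsc_card, ← hcompl_card]
    exact Finset.card_le_card hsc_sub
  set S : Finset V := Finset.image rep Finset.univ with hS
  have hS_sub : S ⊆ insert v0 ((Iᶜ : Finset V) \ secondCoords) := by
    intro a ha
    rw [hS] at ha
    obtain ⟨v, -, rfl⟩ := Finset.mem_image.mp ha
    by_cases hvI : v ∈ I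
    · rw [hrepI v hvI]; exact Finset.mem_insert_self _ _
    · refine Finset.mem_insert_of_mem (Finset.mem_sdiff.mpr ⟨Finset.mem_compl.mpr (hrepR v hvI), ?_⟩)
      intro hmem2
      rw [hsc] at hmem2
      obtain ⟨q, hq, hq2⟩ := Finset.mem_image.mp hmem2
      rcases hrep_spec v hvI with ⟨p, hp, hp2, hrv⟩ | ⟨hnp, hrv⟩
      · rw [hrv] at hq2
        exact h12 p hp q hq hq2.symm
      · rw [hrv] at hq2
        exact hnp q hq hq2
  have hS_card : S.card ≤ n + 1 - I.card - M.card := by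
    have h1 : S.card ≤ ((Iᶜ : Finset V) \ secondCoords).card + 1 :=
      le_trans (Finset.card_le_card hS_sub) (Finset.card_insert_le _ _)
    rw [Finset.card_sdiff_of_subset hsc_sub, hcompl_card, hsc_card] at h1
    omega
  -- build the coloring
  set K := n + 1 - I.card - M.card with hK
  obtain ⟨f⟩ : Nonempty (↥S ↪ Fin K) := by
    apply Function.Embedding.nonempty_of_card_le
    simpa using hS_card
  have hrepS : ∀ v, rep v ∈ S := fun v => Finset.mem_image_of_mem _ (Finset.mem_univ v)
  set c : V → Fin K := fun v => f ⟨rep v, hrepS v⟩ with hc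
  have hc_iff : ∀ u x, c x = c u ↔ rep x = rep u := by
    intro u x
    constructor
    · intro h
      have := f.injective h
      exact Subtype.ext_iff.mp this
    · intro h
      simp only [hc]
      congr 1
      exact Subtype.ext h
  have hcol : G.IsMajorityDominatorColoring c := by
    constructor
    · intro u v hadj h
      exact hproper u v hadj ((hc_iff v u).mp h)
    · intro v
      -- find u with (u = v ∨ G.Adj v u) and u ∉ I
      obtain ⟨u, hucov, huI⟩ : ∃ u, (u = v ∨ G.Adj v u) ∧ u ∉ I := by
        by_cases hvI : v ∈ I
        · obtain ⟨u, hadj⟩ : ∃ u, G.Adj v u := by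
            obtain ⟨w, hw⟩ := Fintype.exists_ne_of_one_lt_card (by omega) v
            obtain ⟨p⟩ := hG.preconnected v w
            cases p with
            | nil => exact absurd rfl hw
            | cons h _ => exact ⟨_, h⟩
          refine ⟨u, Or.inr hadj, fun huI => hI v hvI u huI hadj⟩
        · exact ⟨v, Or.inl rfl, hvI⟩
      refine ⟨c u, ⟨u, rfl⟩, ?_⟩
      obtain ⟨w, hw⟩ := hfiber u huI
      have hsub1 : {x | c x = c u} ⊆ {u, w} := by
        intro x hx
        rcases hw x ((hc_iff u x).mp hx) with h | h
        · exact Or.inl h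
        · exact Or.inr h
      have h2 : {x | c x = c u}.ncard ≤ 2 := by
        refine le_trans (Set.ncard_le_ncard hsub1 (Set.toFinite _)) ?_
        refine le_trans (Set.ncard_insert_le _ _) ?_
        simp
      have h3 : 1 ≤ {x | c x = c u ∧ (x = v ∨ G.Adj v x)}.ncard := by
        have hmemu : u ∈ {x | c x = c u ∧ (x = v ∨ G.Adj v x)} := ⟨rfl, hucov⟩
        have := Set.ncard_le_ncard (Set.singleton_subset_iff.mpr hmemu) (Set.toFinite _)
        simpa using this
      omega
  -- conclude
  have hgoal : n + 1 - G.indepNum' - H.matchingNum' = K := by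
    rw [hK, ← hImax, hMcard]
  rw [hgoal]
  exact Nat.sInf_le ⟨c, hcol⟩
end

section
/- If G is a connected finite simple graph of order n with a vertex of degree n − 1, then χ_md(G) = χ(G). -/
open SimpleGraph

/-!
A vertex `v` adjacent to every other vertex is alone in its colour class under any proper
colouring, and it lies in every closed neighbourhood. So the class `{v}` is entirely dominated
by every vertex, and every proper colouring, in particular an optimal one, is a majority dominator
colouring.
-/

namespace SimpleGraph

variable {V : Type*} {G : SimpleGraph V} {k : ℕ}

theorem IsMajorityDominatorColoring.colorable {c : V → Fin k}
    (hc : G.IsMajorityDominatorColoring c) : G.Colorable k :=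
  ⟨Coloring.mk c fun huv => hc.1 _ _ huv⟩

theorem majorityDominatorChromaticNumber_le {c : V → Fin k}
    (hc : G.IsMajorityDominatorColoring c) : G.majorityDominatorChromaticNumber ≤ k :=
  Nat.sInf_le ⟨c, hc⟩

theorem chromaticNumber_le_majorityDominatorChromaticNumber
    (h : ∃ k, ∃ c : V → Fin k, G.IsMajorityDominatorColoring c) :
    G.chromaticNumber ≤ G.majorityDominatorChromaticNumber := by
  obtain ⟨c, hc⟩ := Nat.sInf_mem h
  exact hc.colorable.chromaticNumber_le

theorem Coloring.eq_of_color_eq_of_isUniversal {α : Type*} (C : G.Coloring α) {v w : V}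
    (hv : G.IsUniversal v) (hw : C w = C v) : w = v :=
  by_contra fun hwv => C.valid (hv (Ne.symm hwv)) hw.symm

theorem Coloring.isMajorityDominatorColoring_of_isUniversal (C : G.Coloring (Fin k)) {v : V}
    (hv : G.IsUniversal v) : G.IsMajorityDominatorColoring C := by
  refine ⟨fun _ _ huv => C.valid huv, fun u => ⟨C v, ⟨v, rfl⟩, ?_⟩⟩
  have hclass : {w | C w = C v} = {v} :=
    Set.eq_singleton_iff_unique_mem.2 ⟨rfl, fun _ => C.eq_of_color_eq_of_isUniversal hv⟩
  have hdominated : {w | C w = C v ∧ (w = u ∨ G.Adj u w)} = {v} :=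
    Set.eq_singleton_iff_unique_mem.2
      ⟨⟨rfl, (eq_or_ne v u).imp_right fun hvu => (hv hvu).symm⟩,
        fun _ hw => C.eq_of_color_eq_of_isUniversal hv hw.1⟩
  rw [hclass, hdominated, Set.ncard_singleton]
  omega

end SimpleGraph

theorem md_eq_chromatic_of_degree_eq_card_sub_one_general {V : Type*} [Fintype V]
    (G : SimpleGraph V) [DecidableRel G.Adj]
    (v : V) (hv : G.degree v = Fintype.card V - 1) :
    (G.majorityDominatorChromaticNumber : ℕ∞) = G.chromaticNumber := by
  have hχ : G.chromaticNumber = G.chromaticNumber.toNat :=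
    (ENat.natCast_toNat (chromaticNumber_ne_top_iff_exists.2 ⟨_, G.colorable_of_fintype⟩)).symm
  obtain ⟨C⟩ := G.colorable_chromaticNumber_of_fintype
  have hmd := C.isMajorityDominatorColoring_of_isUniversal ((G.degree_eq_card_sub_one v).1 hv)
  refine le_antisymm ?_ (chromaticNumber_le_majorityDominatorChromaticNumber ⟨_, _, hmd⟩)
  rw [hχ]
  exact_mod_cast majorityDominatorChromaticNumber_le hmd

theorem md_eq_chromatic_of_degree_eq_card_sub_one {V : Type*} [Fintype V]
    (G : SimpleGraph V) [DecidableRel G.Adj] (hG : G.Connected)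
    (v : V) (hv : G.degree v = Fintype.card V - 1) :
    (G.majorityDominatorChromaticNumber : ℕ∞) = G.chromaticNumber :=
  md_eq_chromatic_of_degree_eq_card_sub_one_general G v hv
end

section
/- If G is the edgeless graph on n vertices (n ≥ 1), then χ_md(G) = ⌈n/2⌉. -/
open SimpleGraph

/-! In the edgeless graph `N[v] = {v}`, so a vertex can only dominate half of its own colour
class: the majority dominator colorings are exactly the colorings whose classes have at most two
vertices. Hence at least `⌈n/2⌉` colours are needed, and pairing up the vertices achieves this. -/

namespace SimpleGraph

variable {V : Type*} {k : ℕ}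

lemma bot_closedNbhd_inter_colorClass (c : V → Fin k) (v : V) (i : Fin k) :
    {u | c u = i ∧ (u = v ∨ (⊥ : SimpleGraph V).Adj v u)} = if c v = i then {v} else ∅ := by
  ext u
  split_ifs <;> aesop

lemma isMajorityDominatorColoring_bot_iff [Finite V] {c : V → Fin k} :
    (⊥ : SimpleGraph V).IsMajorityDominatorColoring c ↔ ∀ v, {u | c u = c v}.ncard ≤ 2 := by
  simp_rw [IsMajorityDominatorColoring, bot_closedNbhd_inter_colorClass]
  simp only [bot_adj, IsEmpty.forall_iff, implies_true, true_and]
  refine forall_congr' fun v => ⟨fun ⟨i, hne, hle⟩ => ?_, fun h => ⟨c v, ⟨v, rfl⟩, by simpa⟩⟩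
  by_cases hv : c v = i
  · simpa [hv] using hle
  · simp only [hv, if_false, Set.ncard_empty, mul_zero, nonpos_iff_eq_zero] at hle
    exact absurd hle ((Set.ncard_pos).mpr hne).ne'

lemma card_le_mul_of_colorClass_ncard_le [Fintype V] {m : ℕ} (c : V → Fin k)
    (h : ∀ v, {u | c u = c v}.ncard ≤ m) : Fintype.card V ≤ m * k := by
  classical
  calc Fintype.card V ≤ m * (Finset.univ.image c).card := by
        refine Finset.card_le_mul_card_image _ m fun i hi => ?_
        obtain ⟨v, -, rfl⟩ := Finset.mem_image.mp hi
        simpa [← Set.ncard_coe_finset] using h v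
    _ ≤ m * k := by
        gcongr
        simpa using Finset.card_le_univ (Finset.univ.image c)

def pairingColoring {n : ℕ} (e : V ≃ Fin n) : V → Fin ((n + 1) / 2) :=
  fun v => ⟨e v / 2, by have := (e v).isLt; omega⟩

lemma pairingColoring_colorClass_ncard_le {n : ℕ} (e : V ≃ Fin n) (v : V) :
    {u | pairingColoring e u = pairingColoring e v}.ncard ≤ 2 := by
  set q := (e v : ℕ) / 2
  calc {u | pairingColoring e u = pairingColoring e v}.ncard
      ≤ ({2 * q, 2 * q + 1} : Set ℕ).ncard := by
        refine Set.ncard_le_ncard_of_injOn (fun u => (e u : ℕ)) (fun u hu => ?_)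
          (Fin.val_injective.comp e.injective).injOn
        simp only [pairingColoring, Set.mem_ofPred_eq, Fin.mk.injEq] at hu
        simp only [Set.mem_insert_iff, Set.mem_singleton_iff]
        omega
    _ = 2 := Set.ncard_pair (by omega)

end SimpleGraph

theorem md_of_edgeless_general {V : Type*} [Fintype V] (G : SimpleGraph V)
    (hG : G = ⊥) :
    G.majorityDominatorChromaticNumber = (Fintype.card V + 1) / 2 := by
  subst hG
  have hpairing : (Fintype.card V + 1) / 2 ∈
      {k | ∃ c : V → Fin k, (⊥ : SimpleGraph V).IsMajorityDominatorColoring c} :=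
    ⟨pairingColoring (Fintype.equivFin V), isMajorityDominatorColoring_bot_iff.mpr
      (pairingColoring_colorClass_ncard_le _)⟩
  refine le_antisymm (Nat.sInf_le hpairing) (le_csInf ⟨_, hpairing⟩ ?_)
  rintro k ⟨c, hc⟩
  have := card_le_mul_of_colorClass_ncard_le c (isMajorityDominatorColoring_bot_iff.mp hc)
  omega

theorem md_of_edgeless {V : Type*} [Fintype V] (G : SimpleGraph V)
    (hn : 1 ≤ Fintype.card V) (hG : G = ⊥) :
    G.majorityDominatorChromaticNumber = (Fintype.card V + 1) / 2 :=
  md_of_edgeless_general G hG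
end

section
/- A finite simple graph G of order n satisfies χ_md(G) = n if and only if G is the complete graph K_n. -/
open SimpleGraph

theorem md_eq_card_iff_complete {V : Type*} [Fintype V] (G : SimpleGraph V) :
    G.majorityDominatorChromaticNumber = Fintype.card V ↔ G = ⊤ := by
  classical
  set n := Fintype.card V with hn
  constructor
  · intro h
    by_contra hne
    have hex : ∃ a b, a ≠ b ∧ ¬ G.Adj a b := by
      by_contra hc
      push_neg at hc
      apply hne
      ext a b
      simp only [top_adj]
      exact ⟨fun h => h.ne, fun h => hc a b h⟩
    obtain ⟨a, b, hab, hnadj⟩ := hex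
    have hn2 : 2 ≤ n := Fintype.one_lt_card_iff_nontrivial.mpr ⟨a, b, hab⟩
    have hcard : Fintype.card {x : V // x ≠ b} = n - 1 := by
      have := Fintype.card_subtype_compl (fun x : V => x = b)
      simpa [Fintype.card_subtype_eq, hn] using this
    let e : {x : V // x ≠ b} ≃ Fin (n - 1) := Fintype.equivFinOfCardEq hcard
    let f : V → {x : V // x ≠ b} := fun x => if hx : x = b then ⟨a, hab⟩ else ⟨x, hx⟩
    let c : V → Fin (n - 1) := fun x => e (f x)
    have hfv : ∀ x : V, (f x : V) = if x = b then a else x := by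
      intro x
      by_cases hx : x = b <;> simp [f, hx]
    have hfib : ∀ u v : V, c u = c v → u = v ∨ (u = a ∧ v = b) ∨ (u = b ∧ v = a) := by
      intro u v hcuv
      have hf : (f u : V) = (f v : V) := by
        have := e.injective hcuv
        exact congrArg Subtype.val this
      rw [hfv, hfv] at hf
      by_cases hu : u = b <;> by_cases hv : v = b <;> simp [hu, hv] at hf ⊢
      · exact Or.inr hf.symm
      · tauto
      · tauto
    -- c is a majority dominator coloring
    have hmem : (n - 1) ∈ {k | ∃ c : V → Fin k, G.IsMajorityDominatorColoring c} := by
      refine ⟨c, ?_, ?_⟩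
      · intro u v hadj hcuv
        rcases hfib u v hcuv with h1 | ⟨h1, h2⟩ | ⟨h1, h2⟩
        · exact G.irrefl (h1 ▸ hadj)
        · exact hnadj (h1 ▸ h2 ▸ hadj)
        · exact hnadj (G.adj_symm (h1 ▸ h2 ▸ hadj))
      · intro v
        refine ⟨c v, ⟨v, rfl⟩, ?_⟩
        set p : V := if v = a then b else if v = b then a else v with hp
        have hsub : {u | c u = c v} ⊆ {v, p} := by
          intro u hu
          rcases hfib u v hu with h1 | ⟨h1, h2⟩ | ⟨h1, h2⟩
          · exact Or.inl h1
          · right; simp [hp, h2, h1, hab.symm]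
          · right; simp [hp, h2, h1]
        have hle2 : {u | c u = c v}.ncard ≤ 2 := by
          calc {u | c u = c v}.ncard ≤ ({v, p} : Set V).ncard :=
                Set.ncard_le_ncard hsub (Set.toFinite _)
            _ ≤ 2 := by
                have := Set.ncard_insert_le v ({p} : Set V)
                simpa using this
        have hge1 : 1 ≤ {u | c u = c v ∧ (u = v ∨ G.Adj v u)}.ncard := by
          have hv : v ∈ {u | c u = c v ∧ (u = v ∨ G.Adj v u)} := ⟨rfl, Or.inl rfl⟩
          have : ({u | c u = c v ∧ (u = v ∨ G.Adj v u)}).Nonempty := ⟨v, hv⟩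
          exact (Set.ncard_pos (Set.toFinite _)).mpr this
        omega
    have hle : G.majorityDominatorChromaticNumber ≤ n - 1 := Nat.sInf_le hmem
    omega
  · intro h
    subst h
    have hmem : n ∈ {k | ∃ c : V → Fin k, (⊤ : SimpleGraph V).IsMajorityDominatorColoring c} := by
      refine ⟨Fintype.equivFin V, ?_, ?_⟩
      · intro u v hadj
        simp only [top_adj] at hadj
        exact fun hc => hadj ((Fintype.equivFin V).injective hc)
      · intro v
        refine ⟨Fintype.equivFin V v, ⟨v, rfl⟩, ?_⟩
        have h1 : {u | Fintype.equivFin V u = Fintype.equivFin V v} = {v} := by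
          ext u
          simp [Equiv.apply_eq_iff_eq]
        have h2 : {u | Fintype.equivFin V u = Fintype.equivFin V v ∧
            (u = v ∨ (⊤ : SimpleGraph V).Adj v u)} = {v} := by
          ext u
          constructor
          · rintro ⟨hu, -⟩
            exact (Fintype.equivFin V).injective hu
          · rintro rfl
            exact ⟨rfl, Or.inl rfl⟩
        rw [h1, h2, Set.ncard_singleton]
        omega
    refine le_antisymm (Nat.sInf_le hmem) (le_csInf ⟨n, hmem⟩ ?_)
    rintro k ⟨c, hproper, -⟩
    have hinj : Function.Injective c := by
      intro u v huv
      by_contra hne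
      exact hproper u v (by simp [top_adj, hne]) huv
    simpa using Fintype.card_le_of_injective c hinj
end

section
/- A connected finite simple graph G of order n ≥ 3 satisfies χ_md(G) = n − 1 if and only if G is obtained from the complete graph K_n by deleting a nonempty set of at most n − 2 edges all incident to one common vertex. -/
open SimpleGraph

section Aux

variable {V : Type*} [Fintype V] [DecidableEq V] (G : SimpleGraph V)

private lemma exists_neighbor (hG : G.Connected) (hn : 2 ≤ Fintype.card V) (v : V) :
    ∃ w, G.Adj v w := by
  obtain ⟨w, hw⟩ := Fintype.exists_ne_of_one_lt_card (by omega) v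
  obtain ⟨p⟩ := hG.preconnected v w
  exact ⟨p.getVert 1, p.adj_snd (SimpleGraph.Walk.not_nil_of_ne hw.symm)⟩

private lemma builder (f : V → V) (B : Finset V)
    (hfB : ∀ x, f x ∉ B)
    (hprop : ∀ u w, G.Adj u w → f u ≠ f w)
    (hhappy : ∀ u, ∃ i, (∃ x, f x = i) ∧
      {x | f x = i}.ncard ≤ 2 * {x | f x = i ∧ (x = u ∨ G.Adj u x)}.ncard) :
    ∃ c : V → Fin (Fintype.card V - B.card), G.IsMajorityDominatorColoring c := by
  have hcard : Fintype.card ↥(Finset.univ \ B) = Fintype.card V - B.card := by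
    rw [Fintype.card_coe, Finset.card_sdiff_of_subset (Finset.subset_univ B), Finset.card_univ]
  let e : ↥(Finset.univ \ B) ≃ Fin (Fintype.card V - B.card) := Fintype.equivFinOfCardEq hcard
  have hmem : ∀ x, f x ∈ Finset.univ \ B := fun x => by
    simp [Finset.mem_sdiff, hfB x]
  refine ⟨fun x => e ⟨f x, hmem x⟩, fun u w h hcc => ?_, fun u => ?_⟩
  · exact hprop u w h (by simpa using e.injective hcc)
  · obtain ⟨i, ⟨x0, hx0⟩, hle⟩ := hhappy u
    have hi : i ∈ Finset.univ \ B := hx0 ▸ hmem x0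
    refine ⟨e ⟨i, hi⟩, ⟨x0, ?_⟩, ?_⟩
    · simp [Equiv.apply_eq_iff_eq, hx0]
    · have e1 : {x | e ⟨f x, hmem x⟩ = e ⟨i, hi⟩} = {x | f x = i} := by
        ext x; simp [Equiv.apply_eq_iff_eq]
      have e2 : {x | e ⟨f x, hmem x⟩ = e ⟨i, hi⟩ ∧ (x = u ∨ G.Adj u x)}
          = {x | f x = i ∧ (x = u ∨ G.Adj u x)} := by
        ext x; simp [Equiv.apply_eq_iff_eq]
      simp only [e1, e2]
      exact hle

private lemma clique_lower {k : ℕ} (c : V → Fin k) (hc : G.IsMajorityDominatorColoring c)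
    (W : Finset V) (hW : ∀ a ∈ W, ∀ b ∈ W, a ≠ b → G.Adj a b) : W.card ≤ k := by
  have hinj : Function.Injective (fun x : ↥W => c x) := by
    rintro ⟨a, ha⟩ ⟨b, hb⟩ h
    by_contra hne
    exact hc.1 a b (hW a ha b hb (fun he => hne (Subtype.ext he))) h
  calc W.card = Fintype.card ↥W := (Fintype.card_coe W).symm
    _ ≤ Fintype.card (Fin k) := Fintype.card_le_of_injective _ hinj
    _ = k := Fintype.card_fin k

private lemma ncard_le_two_of_subset_pair {s : Set V} {a b : V} (h : s ⊆ {a, b}) :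
    s.ncard ≤ 2 := by
  calc s.ncard ≤ ({a, b} : Set V).ncard := Set.ncard_le_ncard h (Set.toFinite _)
    _ ≤ ({b} : Set V).ncard + 1 := Set.ncard_insert_le _ _
    _ ≤ 2 := by rw [Set.ncard_singleton]

private lemma happy_self {f : V → V} (u : V)
    (hsmall : {x | f x = f u}.ncard ≤ 2) :
    {x | f x = f u}.ncard ≤ 2 * {x | f x = f u ∧ (x = u ∨ G.Adj u x)}.ncard := by
  have h1 : 0 < {x | f x = f u ∧ (x = u ∨ G.Adj u x)}.ncard :=
    (Set.ncard_pos (Set.toFinite _)).mpr ⟨u, rfl, Or.inl rfl⟩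
  omega

/-- `n` colors always suffice. -/
private lemma upper_id : ∃ c : V → Fin (Fintype.card V), G.IsMajorityDominatorColoring c := by
  have := builder G id ∅ (fun x => Finset.notMem_empty _)
    (fun u w h => G.ne_of_adj h)
    (fun u => ⟨u, ⟨u, rfl⟩, happy_self G u (ncard_le_two_of_subset_pair (a := u) (b := u)
      (fun x hx => by simpa using hx))⟩)
  simpa using this

/-- `n-1` colors suffice when there is a non-edge `v s`. -/
private lemma upper_pair (v s : V) (hvs : v ≠ s) (hns : ¬ G.Adj v s) :
    ∃ c : V → Fin (Fintype.card V - 1), G.IsMajorityDominatorColoring c := by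
  have := builder G (fun x => if x = v then s else x) {v}
    (fun x => by
      simp only [Finset.mem_singleton]
      split_ifs with h
      · exact hvs.symm
      · exact h)
    (fun u w h heq => by
      split_ifs at heq with h1 h2 h2
      · exact G.ne_of_adj h (h1.trans h2.symm)
      · subst h1; subst heq; exact hns h
      · subst h2; subst heq; exact hns h.symm
      · exact G.ne_of_adj h heq)
    (fun u => by
      refine ⟨(fun x => if x = v then s else x) u, ⟨u, rfl⟩, happy_self G u ?_⟩
      apply ncard_le_two_of_subset_pair (a := v) (b := if u = v then s else u)
      intro x hx
      simp only [Set.mem_setOf_eq] at hx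
      by_cases hxv : x = v
      · exact Or.inl hxv
      · rw [if_neg hxv] at hx; exact Or.inr hx)
  rw [Finset.card_singleton] at this
  exact this

/-- `n-2` colors suffice when there are two disjoint non-edges. -/
private lemma upper_two_pairs (a₁ b₁ a₂ b₂ : V)
    (h11 : a₁ ≠ b₁) (h22 : a₂ ≠ b₂) (h12 : a₁ ≠ a₂) (h1b : a₁ ≠ b₂)
    (hb2 : b₁ ≠ a₂) (hbb : b₁ ≠ b₂)
    (hn1 : ¬ G.Adj a₁ b₁) (hn2 : ¬ G.Adj a₂ b₂) :
    ∃ c : V → Fin (Fintype.card V - 2), G.IsMajorityDominatorColoring c := by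
  have hn1' : ¬ G.Adj b₁ a₁ := fun h => hn1 h.symm
  have hn2' : ¬ G.Adj b₂ a₂ := fun h => hn2 h.symm
  set f : V → V := fun z => if z = b₁ then a₁ else if z = b₂ then a₂ else z with hf
  have hfb1 : f b₁ = a₁ := by simp [hf]
  have hfb2 : f b₂ = a₂ := by simp [hf, hbb.symm]
  have hfix : ∀ z, z ≠ b₁ → z ≠ b₂ → f z = z := by
    intro z hz1 hz2; simp [hf, hz1, hz2]
  have hrange : ∀ z, f z = z ∨ (z = b₁ ∧ f z = a₁) ∨ (z = b₂ ∧ f z = a₂) := by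
    intro z
    by_cases h1 : z = b₁
    · exact Or.inr (Or.inl ⟨h1, by rw [h1, hfb1]⟩)
    · by_cases h2 : z = b₂
      · exact Or.inr (Or.inr ⟨h2, by rw [h2, hfb2]⟩)
      · exact Or.inl (hfix z h1 h2)
  have hBcard : ({b₁, b₂} : Finset V).card = 2 := by
    rw [Finset.card_insert_of_notMem (by simpa using hbb), Finset.card_singleton]
  have := builder G f {b₁, b₂}
    (fun x => by
      simp only [Finset.mem_insert, Finset.mem_singleton, hf]
      split_ifs with h1 h2
      · push_neg; exact ⟨h11, h1b⟩
      · push_neg; exact ⟨Ne.symm hb2, h22⟩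
      · push_neg; exact ⟨h1, h2⟩)
    (fun u w h heq => by
      rcases hrange u with hu | ⟨hub, hu⟩ | ⟨hub, hu⟩ <;>
        rcases hrange w with hw' | ⟨hwb, hw'⟩ | ⟨hwb, hw'⟩ <;>
        rw [hu, hw'] at heq
      · exact G.ne_of_adj h heq
      · exact hn1 (heq ▸ hwb ▸ h)
      · exact hn2 (heq ▸ hwb ▸ h)
      · exact hn1' (heq.symm ▸ hub ▸ h)
      · exact G.ne_of_adj h (hub.trans hwb.symm)
      · exact h12 heq
      · exact hn2' (heq.symm ▸ hub ▸ h)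
      · exact h12 heq.symm
      · exact G.ne_of_adj h (hub.trans hwb.symm))
    (fun u => by
      refine ⟨f u, ⟨u, rfl⟩, happy_self G u ?_⟩
      apply ncard_le_two_of_subset_pair
        (a := f u) (b := if f u = a₁ then b₁ else if f u = a₂ then b₂ else f u)
      intro x hx
      simp only [Set.mem_setOf_eq] at hx
      rcases hrange x with hx' | ⟨rfl, hx'⟩ | ⟨rfl, hx'⟩
      · left; rw [← hx', hx]
      · rw [hx'] at hx
        right; rw [if_pos hx.symm]; exact rfl
      · rw [hx'] at hx
        right; rw [if_neg (fun hcon => h12 (hx ▸ hcon).symm), if_pos hx.symm]; exact rfl)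
  rw [hBcard] at this
  exact this

/-- `n-2` colors suffice when there is an independent triple. -/
private lemma upper_triple (hG : G.Connected) (hcard : 2 ≤ Fintype.card V) (a b c : V)
    (hab : a ≠ b) (hac : a ≠ c) (hbc : b ≠ c)
    (nab : ¬ G.Adj a b) (nac : ¬ G.Adj a c) (nbc : ¬ G.Adj b c) :
    ∃ cc : V → Fin (Fintype.card V - 2), G.IsMajorityDominatorColoring cc := by
  have nab' : ¬ G.Adj b a := fun h => nab h.symm
  have nac' : ¬ G.Adj c a := fun h => nac h.symm
  have nbc' : ¬ G.Adj c b := fun h => nbc h.symm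
  set f : V → V := fun z => if z = b then a else if z = c then a else z with hf
  have hfix : ∀ z, z ≠ b → z ≠ c → f z = z := by
    intro z hz1 hz2; simp [hf, hz1, hz2]
  have hrange : ∀ z, f z = z ∨ ((z = b ∨ z = c) ∧ f z = a) := by
    intro z
    by_cases h1 : z = b
    · exact Or.inr ⟨Or.inl h1, by simp [hf, h1]⟩
    · by_cases h2 : z = c
      · exact Or.inr ⟨Or.inr h2, by simp [hf, h1, h2]⟩
      · exact Or.inl (hfix z h1 h2)
  have hBcard : ({b, c} : Finset V).card = 2 := by
    rw [Finset.card_insert_of_notMem (by simpa using hbc), Finset.card_singleton]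
  have := builder G f {b, c}
    (fun x => by
      simp only [Finset.mem_insert, Finset.mem_singleton, hf]
      split_ifs with h1 h2
      · push_neg; exact ⟨hab, hac⟩
      · push_neg; exact ⟨hab, hac⟩
      · push_neg; exact ⟨h1, h2⟩)
    (fun u w h heq => by
      rcases hrange u with hu | ⟨hu1, hu⟩ <;> rcases hrange w with hw' | ⟨hw1, hw'⟩ <;>
        rw [hu, hw'] at heq
      · exact G.ne_of_adj h heq
      · subst heq
        rcases hw1 with rfl | rfl
        · exact nab h
        · exact nac h
      · subst heq
        rcases hu1 with rfl | rfl
        · exact nab' h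
        · exact nac' h
      · rcases hu1 with rfl | rfl <;> rcases hw1 with rfl | rfl
        · exact G.ne_of_adj h rfl
        · exact nbc h
        · exact nbc' h
        · exact G.ne_of_adj h rfl)
    (fun u => by
      by_cases hu : f u = a
      · -- u is in the triple; use a neighbour's singleton class
        obtain ⟨w, hw⟩ := exists_neighbor G hG hcard u
        have hupre : u = a ∨ u = b ∨ u = c := by
          rcases hrange u with hu' | ⟨h', -⟩
          · exact Or.inl (by rw [← hu', hu])
          · exact Or.inr h'
        have hwnot : w ≠ a ∧ w ≠ b ∧ w ≠ c := by
          rcases hupre with rfl | rfl | rfl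
          · exact ⟨Ne.symm (G.ne_of_adj hw),
              fun h' => nab (h' ▸ hw), fun h' => nac (h' ▸ hw)⟩
          · exact ⟨fun h' => nab' (h' ▸ hw), Ne.symm (G.ne_of_adj hw),
              fun h' => nbc (h' ▸ hw)⟩
          · exact ⟨fun h' => nac' (h' ▸ hw), fun h' => nbc' (h' ▸ hw),
              Ne.symm (G.ne_of_adj hw)⟩
        have hfw : f w = w := hfix w hwnot.2.1 hwnot.2.2
        refine ⟨w, ⟨w, hfw⟩, ?_⟩
        have hsmall : {x | f x = w}.ncard ≤ 2 :=
          ncard_le_two_of_subset_pair (a := w) (b := w) (by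
            intro x hx
            simp only [Set.mem_setOf_eq] at hx
            rcases hrange x with hx' | ⟨-, hx'⟩
            · left; rw [← hx', hx]
            · exact absurd (hx' ▸ hx : a = w).symm hwnot.1)
        have hpos : 0 < {x | f x = w ∧ (x = u ∨ G.Adj u x)}.ncard :=
          (Set.ncard_pos (Set.toFinite _)).mpr ⟨w, hfw, Or.inr hw⟩
        omega
      · refine ⟨f u, ⟨u, rfl⟩, happy_self G u ?_⟩
        apply ncard_le_two_of_subset_pair (a := f u) (b := f u)
        intro x hx
        simp only [Set.mem_setOf_eq] at hx
        rcases hrange x with hx' | ⟨-, hx'⟩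
        · left; rw [← hx', hx]
        · exact absurd (by rw [← hx, hx']) hu)
  rw [hBcard] at this
  exact this

end Aux

theorem md_eq_card_sub_one_iff {V : Type*} [Fintype V] [DecidableEq V]
    (G : SimpleGraph V) (hG : G.Connected) (hn : 3 ≤ Fintype.card V) :
    G.majorityDominatorChromaticNumber = Fintype.card V - 1 ↔
      ∃ (v : V) (S : Finset V), v ∉ S ∧ S.Nonempty ∧ S.card ≤ Fintype.card V - 2 ∧
        ∀ a b : V, G.Adj a b ↔
          (a ≠ b ∧ ¬ ((a = v ∧ b ∈ S) ∨ (b = v ∧ a ∈ S))) := by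
  classical
  unfold SimpleGraph.majorityDominatorChromaticNumber
  have hidm : Fintype.card V ∈ {k | ∃ c : V → Fin k, G.IsMajorityDominatorColoring c} :=
    upper_id G
  constructor
  · intro h
    have hmem : Fintype.card V - 1 ∈ {k | ∃ c : V → Fin k, G.IsMajorityDominatorColoring c} :=
      h ▸ Nat.sInf_mem ⟨_, hidm⟩
    obtain ⟨c, hc⟩ := hmem
    obtain ⟨p, q, hpq, hcpq⟩ := Fintype.exists_ne_map_eq_of_card_lt c
      (by simp only [Fintype.card_fin]; omega)
    have hnpq : ¬ G.Adj p q := fun hadj => hc.1 p q hadj hcpq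
    have hm : ∀ a₁ b₁ a₂ b₂ : V, a₁ ≠ b₁ → a₂ ≠ b₂ → a₁ ≠ a₂ → a₁ ≠ b₂ → b₁ ≠ a₂ → b₁ ≠ b₂ →
        ¬G.Adj a₁ b₁ → ¬G.Adj a₂ b₂ → False := by
      intro a₁ b₁ a₂ b₂ d1 d2 d3 d4 d5 d6 e1 e2
      have hmem2 : Fintype.card V - 2 ∈ {k | ∃ c : V → Fin k, G.IsMajorityDominatorColoring c} :=
        upper_two_pairs G a₁ b₁ a₂ b₂ d1 d2 d3 d4 d5 d6 e1 e2
      have hle := Nat.sInf_le hmem2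
      omega
    have ht : ∀ a b c' : V, a ≠ b → a ≠ c' → b ≠ c' →
        ¬G.Adj a b → ¬G.Adj a c' → ¬G.Adj b c' → False := by
      intro a b c' d1 d2 d3 e1 e2 e3
      have hmem2 : Fintype.card V - 2 ∈ {k | ∃ c : V → Fin k, G.IsMajorityDominatorColoring c} :=
        upper_triple G hG (by omega) a b c' d1 d2 d3 e1 e2 e3
      have hle := Nat.sInf_le hmem2
      omega
    have hcen : ∃ v : V, (∃ s, s ≠ v ∧ ¬ G.Adj v s) ∧
        ∀ a b, a ≠ b → ¬G.Adj a b → a = v ∨ b = v := by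
      by_cases hall : ∀ a b, a ≠ b → ¬G.Adj a b → a = p ∨ b = p
      · exact ⟨p, ⟨q, hpq.symm, hnpq⟩, hall⟩
      push_neg at hall
      obtain ⟨x, y, hxy, hnxy, hxp, hyp⟩ := hall
      have key : ∀ r, r ≠ p → r ≠ q → ¬ G.Adj q r →
          (∃ s, s ≠ q ∧ ¬G.Adj q s) ∧ ∀ a b, a ≠ b → ¬G.Adj a b → a = q ∨ b = q := by
        intro r hrp hrq hnqr
        have hpr : G.Adj p r := by
          by_contra hnpr
          exact ht p q r hpq (Ne.symm hrp) (Ne.symm hrq) hnpq hnpr hnqr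
        refine ⟨⟨r, hrq, hnqr⟩, fun a b hab hnab => ?_⟩
        by_contra hcon
        push_neg at hcon
        obtain ⟨haq, hbq⟩ := hcon
        have hpmem : a = p ∨ b = p := by
          by_contra h'
          push_neg at h'
          exact hm a b p q hab hpq h'.1 haq h'.2 hbq hnab hnpq
        have hrmem : a = r ∨ b = r := by
          by_contra h'
          push_neg at h'
          exact hm a b q r hab (Ne.symm hrq) haq h'.1 hbq h'.2 hnab hnqr
        rcases hpmem with rfl | rfl <;> rcases hrmem with h' | h'
        · exact hrp h'.symm
        · subst h'; exact hnab hpr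
        · subst h'; exact hnab hpr.symm
        · exact hrp h'.symm
      have hq : x = q ∨ y = q := by
        by_contra h'
        push_neg at h'
        exact hm x y p q hxy hpq hxp h'.1 hyp h'.2 hnxy hnpq
      rcases hq with h' | h'
      · obtain ⟨h1, h2⟩ := key y hyp (Ne.symm (h' ▸ hxy)) (h' ▸ hnxy)
        exact ⟨q, h1, h2⟩
      · obtain ⟨h1, h2⟩ := key x hxp (h' ▸ hxy) (fun hh => (h' ▸ hnxy : ¬ G.Adj x q) hh.symm)
        exact ⟨q, h1, h2⟩
    obtain ⟨v, ⟨s, hsv, hnvs⟩, hcenter⟩ := hcen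
    refine ⟨v, Finset.univ.filter (fun w => w ≠ v ∧ ¬ G.Adj v w), by simp,
      ⟨s, by simp [hsv, hnvs]⟩, ?_, ?_⟩
    · by_contra hcard
      push_neg at hcard
      have hsub : Finset.univ.filter (fun w => w ≠ v ∧ ¬ G.Adj v w) ⊆ Finset.univ.erase v := by
        intro w hw
        simp only [Finset.mem_filter] at hw
        simp [hw.2.1]
      have hsubcard := Finset.card_le_card hsub
      rw [Finset.card_erase_of_mem (Finset.mem_univ v), Finset.card_univ] at hsubcard
      have hle : (Finset.univ.erase v).card ≤
          (Finset.univ.filter (fun w => w ≠ v ∧ ¬ G.Adj v w)).card := by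
        rw [Finset.card_erase_of_mem (Finset.mem_univ v), Finset.card_univ]
        omega
      have heq := Finset.eq_of_subset_of_card_le hsub hle
      obtain ⟨w, hw⟩ := exists_neighbor G hG (by omega) v
      have hwmem : w ∈ Finset.univ.erase v := by
        simp [Ne.symm (G.ne_of_adj hw)]
      rw [← heq] at hwmem
      simp only [Finset.mem_filter] at hwmem
      exact hwmem.2.2 hw
    · intro a b
      constructor
      · intro hadj
        refine ⟨G.ne_of_adj hadj, ?_⟩
        rintro (⟨rfl, hbS⟩ | ⟨rfl, haS⟩)
        · simp only [Finset.mem_filter] at hbS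
          exact hbS.2.2 hadj
        · simp only [Finset.mem_filter] at haS
          exact haS.2.2 hadj.symm
      · rintro ⟨hab, hnot⟩
        by_contra hnadj
        rcases hcenter a b hab hnadj with rfl | rfl
        · exact hnot (Or.inl ⟨rfl, by simp [Ne.symm hab, hnadj]⟩)
        · have h2 : ¬ G.Adj b a := fun hh => hnadj hh.symm
          exact hnot (Or.inr ⟨rfl, by simp [hab, h2]⟩)
  · rintro ⟨v, S, hvS, ⟨s, hsS⟩, hScard, hadj⟩
    have hvs : v ≠ s := by rintro rfl; exact hvS hsS
    have hnvs : ¬ G.Adj v s := by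
      rw [hadj]
      rintro ⟨-, hno⟩
      exact hno (Or.inl ⟨rfl, hsS⟩)
    have hup : Fintype.card V - 1 ∈ {k | ∃ c : V → Fin k, G.IsMajorityDominatorColoring c} :=
      upper_pair G v s hvs hnvs
    have hlow : ∀ k ∈ {k | ∃ c : V → Fin k, G.IsMajorityDominatorColoring c},
        Fintype.card V - 1 ≤ k := by
      rintro k ⟨c, hc⟩
      have hclique := clique_lower G c hc (Finset.univ.erase v) ?_
      · rw [Finset.card_erase_of_mem (Finset.mem_univ v), Finset.card_univ] at hclique
        exact hclique
      · intro x hx y hy hxy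
        simp only [Finset.mem_erase] at hx hy
        rw [hadj]
        refine ⟨hxy, ?_⟩
        rintro (⟨rfl, -⟩ | ⟨rfl, -⟩)
        · exact hx.1 rfl
        · exact hy.1 rfl
    exact le_antisymm (Nat.sInf_le hup) (hlow _ (Nat.sInf_mem ⟨_, hup⟩))
end

section
/- For every n ≥ 3, the corona product C_n ∘ K_1 (the cycle C_n with one pendant vertex attached to each cycle vertex) satisfies χ_md(C_n ∘ K_1) = ⌈n/2⌉ + 1. -/
open SimpleGraph

/-- The corona product `C_n ∘ K_1`: a cycle on `Fin n` (the `Sum.inl` vertices),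
with a pendant vertex `Sum.inr i` attached to each cycle vertex `Sum.inl i`. -/
def coronaCycleK1 (n : ℕ) : SimpleGraph (Fin n ⊕ Fin n) :=
  SimpleGraph.fromRel (fun a b =>
    match a, b with
    | Sum.inl i, Sum.inl j => (SimpleGraph.cycleGraph n).Adj i j
    | Sum.inl i, Sum.inr j => i = j
    | _, _ => False)

lemma corona_adj_ll {n : ℕ} {i j : Fin n} :
    (coronaCycleK1 n).Adj (Sum.inl i) (Sum.inl j) ↔ (cycleGraph n).Adj i j := by
  simp only [coronaCycleK1, fromRel_adj]
  constructor
  · rintro ⟨hne, h | h⟩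
    · exact h
    · exact h.symm
  · intro h
    exact ⟨by simpa using h.ne, Or.inl h⟩

lemma corona_adj_r {n : ℕ} {i : Fin n} {u : Fin n ⊕ Fin n} :
    (coronaCycleK1 n).Adj (Sum.inr i) u ↔ u = Sum.inl i := by
  cases u with
  | inl j => simp only [coronaCycleK1, fromRel_adj]; constructor
             · rintro ⟨hne, h | h⟩
               · exact h.elim
               · simp [h]
             · rintro h; injection h with h; subst h; exact ⟨by simp, Or.inr rfl⟩
  | inr j => simp only [coronaCycleK1, fromRel_adj]; constructor
             · rintro ⟨hne, h | h⟩ <;> exact h.elim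
             · rintro ⟨⟩

lemma corona_adj_lr {n : ℕ} {i j : Fin n} :
    (coronaCycleK1 n).Adj (Sum.inl i) (Sum.inr j) ↔ i = j := by
  rw [(coronaCycleK1 n).adj_comm, corona_adj_r]
  simp [eq_comm]

lemma cycle_adj_nat {n : ℕ} (hn : 3 ≤ n) {i j : Fin n} :
    (cycleGraph n).Adj i j ↔ (j.val = (i.val + 1) % n ∨ i.val = (j.val + 1) % n) := by
  have : NeZero n := ⟨by omega⟩
  rw [cycleGraph_adj']
  have key : ∀ a b : Fin n, ((a - b).val = 1) ↔ a.val = (b.val + 1) % n := by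
    intro a b
    have h1 : 1 % n = 1 := Nat.mod_eq_of_lt (by omega)
    rw [show (1 : ℕ) = (1 : Fin n).val by rw [Fin.val_one']; omega]
    rw [← Fin.ext_iff, sub_eq_iff_eq_add]
    rw [Fin.ext_iff, Fin.val_add, Fin.val_one', h1, Nat.add_comm]
  rw [key, key]
  tauto

lemma md_lower (n : ℕ) (hn : 3 ≤ n) (k : ℕ) (c : Fin n ⊕ Fin n → Fin k)
    (h : (coronaCycleK1 n).IsMajorityDominatorColoring c) : (n + 1) / 2 + 1 ≤ k := by
  classical
  let V := Fin n ⊕ Fin n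
  set cls : Fin k → Finset V := fun col => Finset.univ.filter (fun u => c u = col) with hcls
  have hset : ∀ col : Fin k, {u : V | c u = col} = ↑(cls col) := by
    intro col; ext u; simp [hcls]
  -- Step 1
  have step1 : ∀ i : Fin n, ∃ col : Fin k,
      (cls col).card ≤ 2 ∧ (Sum.inl i ∈ cls col ∨ Sum.inr i ∈ cls col) := by
    intro i
    obtain ⟨col, hne, hle⟩ := h.2 (Sum.inr i)
    set I : Set V := {u | c u = col ∧ (u = Sum.inr i ∨ (coronaCycleK1 n).Adj (Sum.inr i) u)}
      with hI
    have hIsub : I ⊆ {Sum.inl i, Sum.inr i} := by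
      rintro u ⟨-, h1 | h2⟩
      · right; exact h1
      · left; exact corona_adj_r.mp h2
    have hadj : (coronaCycleK1 n).Adj (Sum.inr i) (Sum.inl i) := corona_adj_r.mpr rfl
    have hnotboth : ¬ (Sum.inl i ∈ I ∧ Sum.inr i ∈ I) := by
      rintro ⟨⟨h1, -⟩, ⟨h2, -⟩⟩
      exact h.1 _ _ hadj (h2.trans h1.symm)
    have hI1 : I.ncard ≤ 1 := by
      by_cases hmem : Sum.inl i ∈ I
      · have : I ⊆ {Sum.inl i} := by
          intro u hu
          rcases hIsub hu with h1 | h2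
          · exact h1
          · exact absurd ⟨hmem, h2 ▸ hu⟩ hnotboth
        calc I.ncard ≤ ({Sum.inl i} : Set V).ncard := Set.ncard_le_ncard this (Set.finite_singleton _)
          _ = 1 := Set.ncard_singleton _
      · have : I ⊆ {Sum.inr i} := by
          intro u hu
          rcases hIsub hu with h1 | h2
          · exact absurd (h1 ▸ hu) hmem
          · exact h2
        calc I.ncard ≤ ({Sum.inr i} : Set V).ncard := Set.ncard_le_ncard this (Set.finite_singleton _)
          _ = 1 := Set.ncard_singleton _
    have hInon : I.Nonempty := by
      rw [Set.nonempty_iff_ne_empty]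
      intro hemp
      rw [hemp, Set.ncard_empty, Nat.mul_zero, Nat.le_zero, Set.ncard_eq_zero (Set.toFinite _)]
        at hle
      obtain ⟨w, hw⟩ := hne
      rw [Set.eq_empty_iff_forall_notMem] at hle
      exact hle w hw
    obtain ⟨w, hwI⟩ := hInon
    refine ⟨col, ?_, ?_⟩
    · have h2' : {u : Fin n ⊕ Fin n | c u = col}.ncard ≤ 2 := le_trans hle (by omega)
      rwa [hset, Set.ncard_coe_finset] at h2' 
    · rcases hIsub hwI with h1 | h2
      · left; rw [hcls]; simp only [Finset.mem_filter, Finset.mem_univ, true_and]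
        rw [← h1]; exact hwI.1
      · right; simp only [hcls, Finset.mem_filter, Finset.mem_univ, true_and]
        rw [← h2]; exact hwI.1
  choose g hg1 hg2 using step1
  -- fibers of g have card ≤ 2
  have fibcard : ∀ col ∈ Finset.univ.image g,
      (Finset.univ.filter (fun i => g i = col)).card ≤ 2 := by
    intro col hcol
    obtain ⟨i0, -, hi0⟩ := Finset.mem_image.mp hcol
    have : (Finset.univ.filter (fun i => g i = col)).card ≤ (cls col).card := by
      apply Finset.card_le_card_of_injOn
        (fun i => if Sum.inl i ∈ cls (g i) then (Sum.inl i : V) else Sum.inr i)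
      · intro i hi
        have hi : g i = col := by simpa using hi
        beta_reduce; rw [Finset.mem_coe]
        by_cases hmem : Sum.inl i ∈ cls (g i)
        · rw [if_pos hmem]; rwa [← hi]
        · rw [if_neg hmem]; rw [← hi]
          rcases hg2 i with h1 | h2
          · exact absurd h1 hmem
          · exact h2
      · intro a _ b _ hab
        by_cases ha : Sum.inl a ∈ cls (g a) <;> by_cases hb : Sum.inl b ∈ cls (g b) <;>
          simp [ha, hb] at hab <;> tauto
    exact le_trans this (hi0 ▸ hg1 i0)
  have himg : (n : ℕ) ≤ 2 * (Finset.univ.image g).card := by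
    have hsum := Finset.card_eq_sum_card_fiberwise
      (f := g) (s := Finset.univ) (t := Finset.univ.image g)
      (fun x _ => Finset.mem_image_of_mem g (Finset.mem_univ x))
    have : (Finset.univ : Finset (Fin n)).card ≤ 2 * (Finset.univ.image g).card := by
      rw [hsum]
      calc ∑ col ∈ Finset.univ.image g, (Finset.univ.filter (fun i => g i = col)).card
          ≤ ∑ _col ∈ Finset.univ.image g, 2 := Finset.sum_le_sum fibcard
        _ = 2 * (Finset.univ.image g).card := by rw [Finset.sum_const]; ring
    simpa using this
  by_cases hall : ∀ col : Fin k, (cls col).card ≤ 2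
  · -- all classes small : 2n ≤ 2k
    have hsum := Finset.card_eq_sum_card_fiberwise
      (f := c) (s := (Finset.univ : Finset V)) (t := Finset.univ)
      (fun x _ => Finset.mem_univ (c x))
    have h2n : (Finset.univ : Finset V).card ≤ 2 * k := by
      rw [hsum]
      calc ∑ col ∈ Finset.univ, (Finset.univ.filter (fun u => c u = col)).card
          ≤ ∑ _col ∈ (Finset.univ : Finset (Fin k)), 2 := Finset.sum_le_sum (fun col _ => hall col)
        _ = 2 * k := by rw [Finset.sum_const]; simp [Nat.mul_comm]
    have : (Finset.univ : Finset V).card = n + n := by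
      simp [V, Fintype.card_sum]
    omega
  · push_neg at hall
    obtain ⟨col₀, hcol₀⟩ := hall
    have hnotmem : col₀ ∉ Finset.univ.image g := fun hmem => absurd (fibcard col₀ hmem) (by
      obtain ⟨i0, -, hi0⟩ := Finset.mem_image.mp hmem
      intro _; exact absurd (hi0 ▸ hg1 i0) (by omega))
    have : (insert col₀ (Finset.univ.image g)).card ≤ k := by
      have := Finset.card_le_card (Finset.subset_univ (insert col₀ (Finset.univ.image g)))
      simpa using this
    rw [Finset.card_insert_of_notMem hnotmem] at this
    omega

lemma mod_succ_ne (a m : ℕ) (hm : 2 ≤ m) : (a + 1) % m ≠ a % m := by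
  have h1 : a % m < m := Nat.mod_lt _ (by omega)
  have h2 : 1 % m = 1 := Nat.mod_eq_of_lt (by omega)
  rw [Nat.add_mod, h2]
  rcases Nat.lt_or_ge (a % m + 1) m with h | h
  · rw [Nat.mod_eq_of_lt h]; omega
  · have h3 : a % m + 1 = m := by omega
    rw [h3, Nat.mod_self]; omega

lemma mod_two_cases (a m j : ℕ) (hm : 0 < m) (ha : a < 2 * m) (h : a % m = j) :
    a = j ∨ a = m + j := by
  rcases Nat.lt_or_ge a m with h' | h'
  · left; rwa [Nat.mod_eq_of_lt h'] at h
  · right; rw [Nat.mod_eq_sub_mod h', Nat.mod_eq_of_lt (by omega)] at h; omega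

lemma ncard_pair_le {V : Type*} (s : Set V) (x y : V) (h : s ⊆ {x, y}) : s.ncard ≤ 2 :=
  le_trans (Set.ncard_le_ncard h ((Set.finite_singleton y).insert x))
    (le_trans (Set.ncard_insert_le _ _) (by simp))

lemma md_helper {V : Type*} [Finite V] {G : SimpleGraph V} {k : ℕ} {c : V → Fin k}
    {col : Fin k} {v w : V} (hw : c w = col) (hvw : w = v ∨ G.Adj v w)
    (hcard : {u | c u = col}.ncard ≤ 2) :
    {u | c u = col}.Nonempty ∧
      {u | c u = col}.ncard ≤ 2 * {u | c u = col ∧ (u = v ∨ G.Adj v u)}.ncard := by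
  refine ⟨⟨w, hw⟩, ?_⟩
  have h1 : 1 ≤ {u | c u = col ∧ (u = v ∨ G.Adj v u)}.ncard := by
    rw [Nat.one_le_iff_ne_zero]
    intro h0
    rw [Set.ncard_eq_zero (Set.toFinite _), Set.eq_empty_iff_forall_notMem] at h0
    exact h0 w ⟨hw, hvw⟩
  omega

lemma md_upper3 :
    ∃ c : Fin 3 ⊕ Fin 3 → Fin 3, (coronaCycleK1 3).IsMajorityDominatorColoring c := by
  refine ⟨fun u => match u with | Sum.inl i => i | Sum.inr i => i + 1, ?_, ?_⟩
  · rintro (i | i) (j | j) hab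
    · have hne := hab.ne
      simp only [ne_eq, Sum.inl.injEq] at hne
      exact fun hEq => hne (by simpa using hEq)
    · rw [corona_adj_lr] at hab
      subst hab
      revert i; decide
    · rw [corona_adj_r] at hab
      injection hab with hab
      subst hab
      revert j; decide
    · rw [corona_adj_r] at hab
      exact absurd hab (by simp)
  · intro v
    refine ⟨match v with | Sum.inl i => i | Sum.inr i => i + 1, ?_⟩
    have hcard : ∀ col : Fin 3,
        {u : Fin 3 ⊕ Fin 3 | (match u with | Sum.inl i => i | Sum.inr i => i + 1) = col}.ncard
          ≤ 2 := by
      intro col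
      apply ncard_pair_le _ (Sum.inl col) (Sum.inr (col - 1))
      rintro (i | i) hu
      · left; simp only [Set.mem_setOf_eq] at hu; rw [hu]
      · right; simp only [Set.mem_setOf_eq] at hu
        rw [show i = col - 1 from eq_sub_of_add_eq hu]
        exact rfl
    match v with
    | Sum.inl i => exact md_helper rfl (Or.inl rfl) (hcard i)
    | Sum.inr i => exact md_helper rfl (Or.inl rfl) (hcard (i + 1))

lemma md_upper (n : ℕ) (hn : 4 ≤ n) :
    ∃ c : Fin n ⊕ Fin n → Fin ((n + 1) / 2 + 1),
      (coronaCycleK1 n).IsMajorityDominatorColoring c := by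
  set m := n / 2 with hm
  set M := (n + 1) / 2 with hM
  have hm2 : 2 ≤ m := by omega
  have hM2 : 2 ≤ M := by omega
  have hMm : m ≤ M ∧ M ≤ m + 1 ∧ M + m = n := by omega
  set p : Fin n → ℕ := fun i => if i.val = 0 then M - 1 else (i.val - 1) % m with hp
  have hpmod : ∀ i : Fin n, i.val ≠ 0 → p i = (i.val - 1) % m := by
    intro i h0; rw [hp]; simp [h0]
  have hp0 : ∀ i : Fin n, i.val = 0 → p i = M - 1 := by
    intro i h0; rw [hp]; simp [h0]
  have hplt : ∀ i, p i < M := by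
    intro i
    by_cases h0 : i.val = 0
    · rw [hp0 i h0]; omega
    · rw [hpmod i h0]
      have := Nat.mod_lt (i.val - 1) (show 0 < m by omega)
      omega
  set c : Fin n ⊕ Fin n → Fin (M + 1) := fun u =>
    match u with
    | Sum.inl i => ⟨p i + 1, by have := hplt i; omega⟩
    | Sum.inr _ => ⟨0, by omega⟩ with hc
  have hcl : ∀ i : Fin n, (c (Sum.inl i)).val = p i + 1 := fun i => rfl
  have hcr : ∀ i : Fin n, (c (Sum.inr i)).val = 0 := fun i => rfl
  -- key properness on the cycle
  have key : ∀ i j : Fin n, j.val = (i.val + 1) % n → p i ≠ p j := by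
    intro i j hij
    have hi : i.val < n := i.isLt
    have hjlt : j.val < n := j.isLt
    by_cases h0 : i.val = 0
    · have hj1 : j.val = 1 := by
        rw [h0] at hij; rw [Nat.mod_eq_of_lt (by omega)] at hij; omega
      rw [hp0 i h0, hpmod j (by omega), hj1]
      simp; omega
    · by_cases hlast : i.val = n - 1
      · have hn' : i.val + 1 = n := by omega
        have hj0 : j.val = 0 := by rw [hn', Nat.mod_self] at hij; omega
        rw [hpmod i h0, hp0 j hj0]
        have e1 : (i.val - 1) % m = i.val - 1 - m := by
          rw [Nat.mod_eq_sub_mod (by omega), Nat.mod_eq_of_lt (by omega)]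
        omega
      · have hj' : j.val = i.val + 1 := by
          rw [Nat.mod_eq_of_lt (by omega)] at hij; omega
        rw [hpmod i h0, hpmod j (by omega), hj']
        rw [show i.val + 1 - 1 = (i.val - 1) + 1 by omega]
        exact (mod_succ_ne (i.val - 1) m hm2).symm
  -- class bounds
  have classbound : ∀ i : Fin n, {u | c u = c (Sum.inl i)}.ncard ≤ 2 := by
    intro i
    obtain ⟨j, hj⟩ : ∃ j, p i = j := ⟨_, rfl⟩
    have hjM : j < M := hj ▸ hplt i
    have fib : ∀ i' : Fin n, p i' = j → (i'.val = 0 ∧ j = M - 1) ∨ (i'.val = j + 1 ∧ j < m) ∨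
        (i'.val = m + j + 1 ∧ j < m) := by
      intro i' hpi'
      by_cases h0 : i'.val = 0
      · left; exact ⟨h0, by rw [hp0 i' h0] at hpi'; omega⟩
      · rw [hpmod i' h0] at hpi'
        have hjm : j < m := by
          have := Nat.mod_lt (i'.val - 1) (show 0 < m by omega); omega
        have hcases := mod_two_cases (i'.val - 1) m j (by omega)
          (by have := i'.isLt; omega) hpi'
        have hlt' := i'.isLt
        rcases hcases with h1 | h1
        · right; left; exact ⟨by omega, hjm⟩
        · right; right; omega
    by_cases hjtop : j = M - 1
    · apply ncard_pair_le _ (Sum.inl (⟨0, by omega⟩ : Fin n)) (Sum.inl (⟨m, by omega⟩ : Fin n))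
      rintro (i' | i') hu <;> simp only [Set.mem_setOf_eq] at hu
      · have hpj : p i' = j := by
          have h' := congrArg Fin.val hu
          rw [hcl i', hcl i] at h'; omega
        rcases fib i' hpj with ⟨h1, -⟩ | ⟨h1, h2⟩ | ⟨h1, h2⟩
        · left; simp [Fin.ext_iff, h1]
        · -- i'.val = j + 1 = M, need j + 1 = m possible; with j = M-1: i'.val = M
          right
          simp only [Set.mem_singleton_iff, Sum.inl.injEq, Fin.ext_iff]
          -- need i'.val = m, i.e. M = m  (n even); if M = m + 1 then j = m and j < M means ok,
          omega
        · right
          simp only [Set.mem_singleton_iff, Sum.inl.injEq, Fin.ext_iff]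
          have := i'.isLt
          omega
      · have h' := congrArg Fin.val hu
        rw [hcr i', hcl i] at h'
        omega
    · apply ncard_pair_le _ (Sum.inl (⟨j + 1, by omega⟩ : Fin n))
        (Sum.inl (⟨(m + j + 1) % n, Nat.mod_lt (m + j + 1) (by omega)⟩ : Fin n))
      rintro (i' | i') hu <;> simp only [Set.mem_setOf_eq] at hu
      · have hpi' : p i' = j := by
          have h' := congrArg Fin.val hu
          rw [hcl i', hcl i] at h'; omega
        rcases fib i' hpi' with ⟨-, h2⟩ | ⟨h1, -⟩ | ⟨h1, h2⟩
        · exact absurd h2 hjtop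
        · left; simp [Fin.ext_iff, h1]
        · right
          simp only [Set.mem_singleton_iff, Sum.inl.injEq, Fin.ext_iff]
          have := i'.isLt
          rw [Nat.mod_eq_of_lt (by omega)]
          omega
      · have h' := congrArg Fin.val hu
        rw [hcr i', hcl i] at h'
        omega
  refine ⟨c, ?_, ?_⟩
  · rintro (i | i) (j | j) hab
    · rw [corona_adj_ll, cycle_adj_nat (by omega)] at hab
      intro hEq
      have hEq' : p i = p j := by
        have h' := congrArg Fin.val hEq; rw [hcl i, hcl j] at h'; omega
      rcases hab with h1 | h1
      · exact key i j h1 hEq'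
      · exact key j i h1 hEq'.symm
    · intro hEq
      have h' := congrArg Fin.val hEq; rw [hcl i, hcr j] at h'; omega
    · intro hEq
      have h' := congrArg Fin.val hEq; rw [hcr i, hcl j] at h'; omega
    · rw [corona_adj_r] at hab
      exact absurd hab (by simp)
  · rintro (i | i)
    · exact ⟨c (Sum.inl i), md_helper rfl (Or.inl rfl) (classbound i)⟩
    · exact ⟨c (Sum.inl i),
        md_helper rfl (Or.inr (corona_adj_r.mpr rfl)) (classbound i)⟩


theorem md_corona_cycle (n : ℕ) (hn : 3 ≤ n) :
    (coronaCycleK1 n).majorityDominatorChromaticNumber = (n + 1) / 2 + 1 := by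
  have hmem : ((n + 1) / 2 + 1) ∈
      {k | ∃ c : Fin n ⊕ Fin n → Fin k,
        (coronaCycleK1 n).IsMajorityDominatorColoring c} := by
    rcases eq_or_lt_of_le hn with h3 | h4
    · subst h3
      exact md_upper3
    · exact md_upper n (by omega)
  have h1 := Nat.sInf_le hmem
  obtain ⟨c0, hc0⟩ := Nat.sInf_mem (⟨_, hmem⟩ : Set.Nonempty
    {k | ∃ c : Fin n ⊕ Fin n → Fin k, (coronaCycleK1 n).IsMajorityDominatorColoring c})
  exact le_antisymm h1 (md_lower n hn _ c0 hc0)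
end

section
/- For the wheel graph W_n (n ≥ 3), χ_md(W_n) = 4 if n is odd and χ_md(W_n) = 3 if n is even. -/
open SimpleGraph

/-- The wheel `W_n`: a cycle on `Fin n` together with a central vertex `none`
adjacent to all cycle vertices. -/
def wheelGraph (n : ℕ) : SimpleGraph (Option (Fin n)) :=
  SimpleGraph.fromRel (fun a b =>
    match a, b with
    | none, some _ => True
    | some _, none => True
    | some i, some j => (SimpleGraph.cycleGraph n).Adj i j
    | none, none => False)

lemma wheel_adj_some_none {n : ℕ} (i : Fin n) : (wheelGraph n).Adj (some i) none := by
  simp [wheelGraph, SimpleGraph.fromRel_adj]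

lemma wheel_adj_some_some {n : ℕ} {i j : Fin n} :
    (wheelGraph n).Adj (some i) (some j) ↔ (cycleGraph n).Adj i j := by
  simp only [wheelGraph, SimpleGraph.fromRel_adj]
  constructor
  · rintro ⟨h, h1 | h1⟩
    · exact h1
    · exact h1.symm
  · intro h
    exact ⟨by simpa using h.ne, Or.inl h⟩

lemma cycle_adj_val {m : ℕ} {i j : Fin (m+3)} (h : (cycleGraph (m+3)).Adj i j) :
    (i.val = j.val + 1 ∨ j.val = i.val + 1) ∨
      (i.val = 0 ∧ j.val = m+2) ∨ (j.val = 0 ∧ i.val = m+2) := by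
  rw [cycleGraph_adj'] at h
  have h1 : (1 : Fin (m+3)).val = 1 := rfl
  have hi := i.is_lt
  have hj := j.is_lt
  rcases h with h | h
  · have hij : i - j = 1 := Fin.ext (by rw [h1]; exact h)
    have : i = 1 + j := sub_eq_iff_eq_add.mp hij
    have hv : i.val = (1 + j.val) % (m+3) := by rw [this, Fin.val_add, h1]
    rcases Nat.lt_or_ge (1 + j.val) (m+3) with h2 | h2
    · rw [Nat.mod_eq_of_lt h2] at hv; omega
    · have : 1 + j.val = m + 3 := by omega
      rw [this, Nat.mod_self] at hv; omega
  · have hij : j - i = 1 := Fin.ext (by rw [h1]; exact h)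
    have : j = 1 + i := sub_eq_iff_eq_add.mp hij
    have hv : j.val = (1 + i.val) % (m+3) := by rw [this, Fin.val_add, h1]
    rcases Nat.lt_or_ge (1 + i.val) (m+3) with h2 | h2
    · rw [Nat.mod_eq_of_lt h2] at hv; omega
    · have : 1 + i.val = m + 3 := by omega
      rw [this, Nat.mod_self] at hv; omega

lemma fin3_alt : ∀ h a x y : Fin 3, x ≠ h → y ≠ h → x ≠ y → a ≠ h →
    ((x = a) ↔ ¬(y = a)) := by decide

open Fin.NatCast in
/-- The wheel on an odd cycle has no proper 3-coloring. -/
lemma odd_no_three (n : ℕ) (hn : 3 ≤ n) (hodd : Odd n) (c : Option (Fin n) → Fin 3)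
    (hp : ∀ u v, (wheelGraph n).Adj u v → c u ≠ c v) : False := by
  obtain ⟨m, rfl⟩ : ∃ m, n = m + 3 := ⟨n - 3, by omega⟩
  have hh : ∀ x : Fin (m+3), c (some x) ≠ c none :=
    fun x => hp _ _ (wheel_adj_some_none x)
  have key : ∀ k : ℕ, (c (some ((k : ℕ) : Fin (m+3))) = c (some 0)) ↔ Even k := by
    intro k
    induction k with
    | zero => simp
    | succ k ih =>
      have hcast : (((k+1 : ℕ)) : Fin (m+3)) = ((k : ℕ) : Fin (m+3)) + 1 := by
        push_cast; ring
      have hadj : (wheelGraph (m+3)).Adj (some ((k:ℕ) : Fin (m+3)))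
          (some (((k+1:ℕ)) : Fin (m+3))) := by
        rw [wheel_adj_some_some, cycleGraph_adj', hcast]
        right
        rw [add_sub_cancel_left]
        rfl
      have hne := hp _ _ hadj
      have halt := fin3_alt (c none) (c (some 0)) (c (some (((k+1:ℕ)) : Fin (m+3))))
        (c (some ((k:ℕ) : Fin (m+3)))) (hh _) (hh _) (Ne.symm hne) (hh 0)
      rw [halt, ih, Nat.even_add_one]
  have hfin := key (m + 3)
  rw [Fin.natCast_self] at hfin
  rw [Nat.not_even_iff_odd.symm] at hodd
  exact hodd (hfin.mp rfl)

/-- The wheel has no proper 2-coloring. -/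
lemma no_two (n : ℕ) (hn : 3 ≤ n) (c : Option (Fin n) → Fin 2)
    (hp : ∀ u v, (wheelGraph n).Adj u v → c u ≠ c v) : False := by
  obtain ⟨m, rfl⟩ : ∃ m, n = m + 3 := ⟨n - 3, by omega⟩
  have h01 : (cycleGraph (m+3)).Adj 0 1 := by
    rw [cycleGraph_adj']
    right
    rw [sub_zero]
    rfl
  have ha := hp _ _ (wheel_adj_some_none (0 : Fin (m+3)))
  have hb := hp _ _ (wheel_adj_some_none (1 : Fin (m+3)))
  have hc := hp _ _ (wheel_adj_some_some.mpr h01)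
  have v1 := (c none).is_lt
  have v2 := (c (some (0 : Fin (m+3)))).is_lt
  have v3 := (c (some (1 : Fin (m+3)))).is_lt
  have e1 : (c (some (0:Fin (m+3)))).val ≠ (c none).val := fun h => ha (Fin.ext h)
  have e2 : (c (some (1:Fin (m+3)))).val ≠ (c none).val := fun h => hb (Fin.ext h)
  have e3 : (c (some (0:Fin (m+3)))).val ≠ (c (some (1:Fin (m+3)))).val :=
    fun h => hc (Fin.ext h)
  omega

/-- 4-coloring of the odd wheel. -/
def cOdd (m : ℕ) : Option (Fin (m+3)) → Fin 4 := fun v =>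
  match v with
  | none => 3
  | some i => if i.val = m + 2 then 2 else ⟨i.val % 2, by omega⟩

/-- 3-coloring of the even wheel. -/
def cEven (m : ℕ) : Option (Fin (m+3)) → Fin 3 := fun v =>
  match v with
  | none => 2
  | some i => ⟨i.val % 2, by omega⟩

lemma cOdd_class (m : ℕ) : {u | cOdd m u = 3} = {none} := by
  ext u
  match u with
  | none => simp [cOdd]
  | some i =>
    simp only [cOdd, Set.mem_setOf_eq, Set.mem_singleton_iff]
    constructor
    · intro h
      exfalso
      split at h
      · exact absurd h (by decide)
      · have hv : i.val % 2 = (3 : Fin 4).val := congrArg Fin.val h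
        simp only [show ((3:Fin 4)).val = 3 from rfl] at hv
        omega
    · intro h
      exact absurd h (by simp)

lemma cEven_class (m : ℕ) : {u | cEven m u = 2} = {none} := by
  ext u
  match u with
  | none => simp [cEven]
  | some i =>
    simp only [cEven, Set.mem_setOf_eq, Set.mem_singleton_iff]
    constructor
    · intro h
      exfalso
      have hv := congrArg Fin.val h
      simp at hv
      omega
    · intro h
      exact absurd h (by simp)

lemma cOdd_proper (m : ℕ) : ∀ u v, (wheelGraph (m+3)).Adj u v → cOdd m u ≠ cOdd m v := by
  intro u v huv
  match u, v with
  | none, none => exact absurd huv ((wheelGraph (m+3)).loopless.irrefl none)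
  | none, some j =>
    intro h
    have hmem : some j ∈ {u | cOdd m u = 3} := by
      simp only [Set.mem_setOf_eq]
      rw [← h]
      rfl
    rw [cOdd_class] at hmem
    simp at hmem
  | some i, none =>
    intro h
    have hmem : some i ∈ {u | cOdd m u = 3} := by
      simp only [Set.mem_setOf_eq]
      rw [h]
      rfl
    rw [cOdd_class] at hmem
    simp at hmem
  | some i, some j =>
    have hcy := cycle_adj_val (wheel_adj_some_some.mp huv)
    have hi := i.is_lt
    have hj := j.is_lt
    intro h
    simp only [cOdd] at h
    split at h <;> split at h
    · rename_i h1 h2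
      rcases hcy with (h3|h3)|(h3|h3) <;> omega
    · have hv : (2 : Fin 4).val = j.val % 2 := congrArg Fin.val h
      simp only [show ((2:Fin 4)).val = 2 from rfl] at hv
      omega
    · have hv : i.val % 2 = (2 : Fin 4).val := congrArg Fin.val h
      simp only [show ((2:Fin 4)).val = 2 from rfl] at hv
      omega
    · have hv : i.val % 2 = j.val % 2 := congrArg Fin.val h
      rename_i h1 h2
      rcases hcy with (h3|h3)|(h3|h3) <;> omega

lemma cEven_proper (m : ℕ) (he : Even (m+3)) :
    ∀ u v, (wheelGraph (m+3)).Adj u v → cEven m u ≠ cEven m v := by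
  intro u v huv
  match u, v with
  | none, none => exact absurd huv ((wheelGraph (m+3)).loopless.irrefl none)
  | none, some j =>
    intro h
    have hmem : some j ∈ {u | cEven m u = 2} := by
      simp only [Set.mem_setOf_eq]
      rw [← h]
      rfl
    rw [cEven_class] at hmem
    simp at hmem
  | some i, none =>
    intro h
    have hmem : some i ∈ {u | cEven m u = 2} := by
      simp only [Set.mem_setOf_eq]
      rw [h]
      rfl
    rw [cEven_class] at hmem
    simp at hmem
  | some i, some j =>
    have hcy := cycle_adj_val (wheel_adj_some_some.mp huv)
    have hi := i.is_lt
    have hj := j.is_lt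
    obtain ⟨l, hl⟩ := he
    intro h
    have hv : i.val % 2 = j.val % 2 := congrArg Fin.val h
    rcases hcy with (h3|h3)|(h3|h3) <;> omega

lemma cOdd_md (m : ℕ) : (wheelGraph (m+3)).IsMajorityDominatorColoring (cOdd m) := by
  refine ⟨cOdd_proper m, fun v => ⟨3, ⟨none, rfl⟩, ?_⟩⟩
  have hdm : none ∈ {u | cOdd m u = 3 ∧ (u = v ∨ (wheelGraph (m+3)).Adj v u)} := by
    refine ⟨rfl, ?_⟩
    match v with
    | none => exact Or.inl rfl
    | some i => exact Or.inr (wheel_adj_some_none i)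
  have h1 : 1 ≤ {u | cOdd m u = 3 ∧ (u = v ∨ (wheelGraph (m+3)).Adj v u)}.ncard :=
    (Set.ncard_pos (Set.toFinite _)).mpr ⟨none, hdm⟩
  rw [cOdd_class, Set.ncard_singleton]
  omega

lemma cEven_md (m : ℕ) (he : Even (m+3)) :
    (wheelGraph (m+3)).IsMajorityDominatorColoring (cEven m) := by
  refine ⟨cEven_proper m he, fun v => ⟨2, ⟨none, rfl⟩, ?_⟩⟩
  have hdm : none ∈ {u | cEven m u = 2 ∧ (u = v ∨ (wheelGraph (m+3)).Adj v u)} := by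
    refine ⟨rfl, ?_⟩
    match v with
    | none => exact Or.inl rfl
    | some i => exact Or.inr (wheel_adj_some_none i)
  have h1 : 1 ≤ {u | cEven m u = 2 ∧ (u = v ∨ (wheelGraph (m+3)).Adj v u)}.ncard :=
    (Set.ncard_pos (Set.toFinite _)).mpr ⟨none, hdm⟩
  rw [cEven_class, Set.ncard_singleton]
  omega

theorem md_wheel (n : ℕ) (hn : 3 ≤ n) :
    (wheelGraph n).majorityDominatorChromaticNumber = if Odd n then 4 else 3 := by
  obtain ⟨m, rfl⟩ : ∃ m, n = m + 3 := ⟨n - 3, by omega⟩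
  by_cases hodd : Odd (m + 3)
  · rw [if_pos hodd]
    apply le_antisymm
    · exact Nat.sInf_le ⟨cOdd m, cOdd_md m⟩
    · apply le_csInf
      · exact ⟨4, cOdd m, cOdd_md m⟩
      rintro k ⟨c, hpc, -⟩
      by_contra hk
      push_neg at hk
      have hk3 : k ≤ 3 := by omega
      exact odd_no_three (m+3) (by omega) hodd (fun v => Fin.castLE hk3 (c v))
        (fun u v huv h => hpc u v huv (Fin.castLE_injective hk3 h))
  · rw [if_neg hodd]
    rw [Nat.not_odd_iff_even] at hodd
    apply le_antisymm
    · exact Nat.sInf_le ⟨cEven m, cEven_md m hodd⟩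
    · apply le_csInf
      · exact ⟨3, cEven m, cEven_md m hodd⟩
      rintro k ⟨c, hpc, -⟩
      by_contra hk
      push_neg at hk
      have hk2 : k ≤ 2 := by omega
      exact no_two (m+3) (by omega) (fun v => Fin.castLE hk2 (c v))
        (fun u v huv h => hpc u v huv (Fin.castLE_injective hk2 h))
end

section
/- Let S_{a,b} be the double star with central vertices u, v of degrees a ≥ 2 and b ≥ 2 respectively. If a ≥ 3 and b ≥ 3 then χ_md(S_{a,b}) = 3; otherwise χ_md(S_{a,b}) = 2. -/
open SimpleGraph

/-- The double star `S_{a,b}`: central vertices `u = Sum.inl none` and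
`v = Sum.inr none` joined by an edge, with `a - 1` leaves attached to `u`
and `b - 1` leaves attached to `v`, so that `deg u = a` and `deg v = b`. -/
def doubleStar (a b : ℕ) : SimpleGraph (Option (Fin (a - 1)) ⊕ Option (Fin (b - 1))) :=
  SimpleGraph.fromRel (fun x y =>
    (x = Sum.inl none ∧ y = Sum.inr none) ∨
    (∃ i, x = Sum.inl none ∧ y = Sum.inl (some i)) ∨
    (∃ j, x = Sum.inr none ∧ y = Sum.inr (some j)))

/-!
A leaf sees only itself and its centre, which receive different colours, so it meets every
colour class in at most one vertex and can only majority-dominate classes of size at most two.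
In a proper 2-colouring the classes are forced: each centre together with the leaves of the
other centre, of sizes `b` and `a`. Hence two colours suffice exactly when `a ≤ 2` or `b ≤ 2`
(every vertex then sees the small class). Otherwise three colours suffice: give each centre its
own colour and all leaves the third, so that every vertex has a centre, a singleton class,
in its closed neighbourhood.
-/

namespace SimpleGraph

variable {V : Type*} {G : SimpleGraph V} {k : ℕ} {c : V → Fin k}

theorem majorityDominatorChromaticNumber_eq (hc : G.IsMajorityDominatorColoring c)
    (h : ∀ (m : ℕ) (c' : V → Fin m), G.IsMajorityDominatorColoring c' → k ≤ m) :
    G.majorityDominatorChromaticNumber = k :=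
  le_antisymm (Nat.sInf_le ⟨c, hc⟩) (le_csInf ⟨k, c, hc⟩ fun _ ⟨c', hc'⟩ => h _ c' hc')

theorem two_le_of_adj (hc : ∀ u v, G.Adj u v → c u ≠ c v) {x y : V} (hxy : G.Adj x y) :
    2 ≤ k := by
  have := (c x).isLt
  have := (c y).isLt
  have := Fin.val_ne_of_ne (hc x y hxy)
  omega

theorem exists_dominated_colorClass_of_ncard_le_two {i : Fin k}
    (hi : {u | c u = i}.ncard ≤ 2) {v e : V} (he : c e = i) (hev : e = v ∨ G.Adj v e) :
    ∃ i : Fin k, {u | c u = i}.Nonempty ∧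
      {u | c u = i}.ncard ≤ 2 * {u | c u = i ∧ (u = v ∨ G.Adj v u)}.ncard := by
  refine ⟨i, ⟨e, he⟩, ?_⟩
  by_cases hfin : {u | c u = i}.Finite
  · have : 0 < {u | c u = i ∧ (u = v ∨ G.Adj v u)}.ncard :=
      Set.ncard_pos (hfin.subset fun _ hu => hu.1) |>.mpr ⟨e, he, hev⟩
    omega
  · simp [Set.Infinite.ncard hfin]

theorem ncard_colorClass_le_two_of_pendant (hc : ∀ u v, G.Adj u v → c u ≠ c v) {x y : V}
    (hx : ∀ u, G.Adj x u → u = y) {i : Fin k}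
    (hdom : {u | c u = i}.ncard ≤ 2 * {u | c u = i ∧ (u = x ∨ G.Adj x u)}.ncard) :
    {u | c u = i}.ncard ≤ 2 := by
  suffices {u | c u = i ∧ (u = x ∨ G.Adj x u)}.ncard ≤ 1 by omega
  have hsub : {u | c u = i ∧ (u = x ∨ G.Adj x u)} ⊆ {x, y} := by
    rintro u ⟨-, rfl | hu⟩
    · exact Or.inl rfl
    · exact Or.inr (hx u hu)
  refine (Set.ncard_le_one ((Set.toFinite _).subset hsub)).mpr ?_
  rintro u ⟨hu, rfl | hxu⟩ w ⟨hw, rfl | hxw⟩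
  · rfl
  · exact absurd (hu.trans hw.symm) (hc _ _ hxw)
  · exact absurd (hw.trans hu.symm) (hc _ _ hxu)
  · rw [hx u hxu, hx w hxw]

end SimpleGraph

theorem Set.ncard_insert_range {α : Type*} {n : ℕ} {f : Fin n → α} (hf : f.Injective) {x : α}
    (hx : x ∉ Set.range f) : (insert x (Set.range f)).ncard = n + 1 := by
  rw [Set.ncard_insert_of_notMem hx (Set.toFinite _), Set.ncard_range_of_injective hf,
    Nat.card_eq_fintype_card, Fintype.card_fin]

theorem Fin.eq_of_ne_of_ne_of_two {x y z : Fin 2} (hxy : x ≠ y) (hzx : z ≠ x) : z = y := by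
  omega

section DoubleStar

variable {a b : ℕ}

@[simp]
theorem doubleStar_adj_inl_none_inr_none :
    (doubleStar a b).Adj (Sum.inl none) (Sum.inr none) := by
  simp [doubleStar]

@[simp]
theorem doubleStar_adj_inl_some_iff {i : Fin (a - 1)} {u} :
    (doubleStar a b).Adj (Sum.inl (some i)) u ↔ u = Sum.inl none := by
  rcases u with (_ | _) | (_ | _) <;> simp [doubleStar]

@[simp]
theorem doubleStar_adj_inr_some_iff {j : Fin (b - 1)} {u} :
    (doubleStar a b).Adj (Sum.inr (some j)) u ↔ u = Sum.inr none := by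
  rcases u with (_ | _) | (_ | _) <;> simp [doubleStar]

theorem doubleStar_colorClass_inr_none {c : Option (Fin (a - 1)) ⊕ Option (Fin (b - 1)) → Fin 2}
    (hc : ∀ u v, (doubleStar a b).Adj u v → c u ≠ c v) :
    {u | c u = c (Sum.inr none)} = insert (Sum.inr none) (Set.range (Sum.inl ∘ some)) := by
  have hLR := hc _ _ doubleStar_adj_inl_none_inr_none
  ext ((_ | i) | (_ | j))
  · simpa using hLR
  · simpa using Fin.eq_of_ne_of_ne_of_two hLR (hc _ _ (doubleStar_adj_inl_some_iff.mpr rfl))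
  · simp
  · simpa using hc _ _ (doubleStar_adj_inr_some_iff.mpr rfl)

theorem doubleStar_colorClass_inl_none {c : Option (Fin (a - 1)) ⊕ Option (Fin (b - 1)) → Fin 2}
    (hc : ∀ u v, (doubleStar a b).Adj u v → c u ≠ c v) :
    {u | c u = c (Sum.inl none)} = insert (Sum.inl none) (Set.range (Sum.inr ∘ some)) := by
  have hRL := (hc _ _ doubleStar_adj_inl_none_inr_none).symm
  ext ((_ | i) | (_ | j))
  · simp
  · simpa using hc _ _ (doubleStar_adj_inl_some_iff.mpr rfl)
  · simpa using hRL
  · simpa using Fin.eq_of_ne_of_ne_of_two hRL (hc _ _ (doubleStar_adj_inr_some_iff.mpr rfl))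

theorem doubleStar_ncard_colorClass_inr_none
    {c : Option (Fin (a - 1)) ⊕ Option (Fin (b - 1)) → Fin 2}
    (hc : ∀ u v, (doubleStar a b).Adj u v → c u ≠ c v) :
    {u | c u = c (Sum.inr none)}.ncard = a - 1 + 1 := by
  rw [doubleStar_colorClass_inr_none hc,
    Set.ncard_insert_range (Sum.inl_injective.comp (Option.some_injective _)) (by simp)]

theorem doubleStar_ncard_colorClass_inl_none
    {c : Option (Fin (a - 1)) ⊕ Option (Fin (b - 1)) → Fin 2}
    (hc : ∀ u v, (doubleStar a b).Adj u v → c u ≠ c v) :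
    {u | c u = c (Sum.inl none)}.ncard = b - 1 + 1 := by
  rw [doubleStar_colorClass_inl_none hc,
    Set.ncard_insert_range (Sum.inr_injective.comp (Option.some_injective _)) (by simp)]

theorem doubleStar_not_isMajorityDominatorColoring_fin_two (ha : 3 ≤ a) (hb : 3 ≤ b)
    (c : Option (Fin (a - 1)) ⊕ Option (Fin (b - 1)) → Fin 2) :
    ¬ (doubleStar a b).IsMajorityDominatorColoring c := by
  rintro ⟨hc, hdom⟩
  obtain ⟨i, -, hi⟩ := hdom (Sum.inl (some ⟨0, by omega⟩))
  have hle := ncard_colorClass_le_two_of_pendant hc (fun _ => doubleStar_adj_inl_some_iff.mp) hi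
  rcases eq_or_ne i (c (Sum.inl none)) with rfl | hiL
  · have := doubleStar_ncard_colorClass_inl_none hc
    omega
  · rw [Fin.eq_of_ne_of_ne_of_two (hc _ _ doubleStar_adj_inl_none_inr_none) hiL,
      doubleStar_ncard_colorClass_inr_none hc] at hle
    omega

theorem doubleStar_three_le_of_isMajorityDominatorColoring (ha : 3 ≤ a) (hb : 3 ≤ b) {k : ℕ}
    {c : Option (Fin (a - 1)) ⊕ Option (Fin (b - 1)) → Fin k}
    (hc : (doubleStar a b).IsMajorityDominatorColoring c) : 3 ≤ k := by
  rcases (two_le_of_adj hc.1 doubleStar_adj_inl_none_inr_none).eq_or_lt with rfl | h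
  · exact absurd hc (doubleStar_not_isMajorityDominatorColoring_fin_two ha hb c)
  · exact h

theorem doubleStar_isMajorityDominatorColoring_fin_two (hab : a ≤ 2 ∨ b ≤ 2)
    {c : Option (Fin (a - 1)) ⊕ Option (Fin (b - 1)) → Fin 2}
    (hc : ∀ u v, (doubleStar a b).Adj u v → c u ≠ c v) :
    (doubleStar a b).IsMajorityDominatorColoring c := by
  refine ⟨hc, fun w => ?_⟩
  rcases hab with ha | hb
  · have hle : {u | c u = c (Sum.inr none)}.ncard ≤ 2 := by
      rw [doubleStar_ncard_colorClass_inr_none hc]; omega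
    have hmem := Set.ext_iff.mp (doubleStar_colorClass_inr_none hc)
    rcases w with (_ | i) | (_ | j)
    · exact exists_dominated_colorClass_of_ncard_le_two hle rfl (by simp)
    · exact exists_dominated_colorClass_of_ncard_le_two hle ((hmem _).mpr (by simp)) (.inl rfl)
    · exact exists_dominated_colorClass_of_ncard_le_two hle rfl (.inl rfl)
    · exact exists_dominated_colorClass_of_ncard_le_two hle rfl (by simp)
  · have hle : {u | c u = c (Sum.inl none)}.ncard ≤ 2 := by
      rw [doubleStar_ncard_colorClass_inl_none hc]; omega
    have hmem := Set.ext_iff.mp (doubleStar_colorClass_inl_none hc)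
    rcases w with (_ | i) | (_ | j)
    · exact exists_dominated_colorClass_of_ncard_le_two hle rfl (.inl rfl)
    · exact exists_dominated_colorClass_of_ncard_le_two hle rfl (by simp)
    · exact exists_dominated_colorClass_of_ncard_le_two hle rfl
        (.inr doubleStar_adj_inl_none_inr_none.symm)
    · exact exists_dominated_colorClass_of_ncard_le_two hle ((hmem _).mpr (by simp)) (.inl rfl)

variable (a b) in
def doubleStar.sideColoring : Option (Fin (a - 1)) ⊕ Option (Fin (b - 1)) → Fin 2
  | Sum.inl none | Sum.inr (some _) => 0
  | Sum.inr none | Sum.inl (some _) => 1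

theorem doubleStar.sideColoring_ne_of_adj (u v) (h : (doubleStar a b).Adj u v) :
    doubleStar.sideColoring a b u ≠ doubleStar.sideColoring a b v := by
  rcases u with (_ | _) | (_ | _) <;> rcases v with (_ | _) | (_ | _) <;>
    simp_all [doubleStar, doubleStar.sideColoring]

variable (a b) in
def doubleStar.centerColoring : Option (Fin (a - 1)) ⊕ Option (Fin (b - 1)) → Fin 3
  | Sum.inl none => 0
  | Sum.inr none => 1
  | Sum.inl (some _) | Sum.inr (some _) => 2

theorem doubleStar_isMajorityDominatorColoring_centerColoring :
    (doubleStar a b).IsMajorityDominatorColoring (doubleStar.centerColoring a b) := by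
  have hL : {u | doubleStar.centerColoring a b u = 0}.ncard ≤ 2 := by
    rw [show {u | doubleStar.centerColoring a b u = 0} = {Sum.inl none} by
      ext ((_ | _) | (_ | _)) <;> simp [doubleStar.centerColoring]]
    simp
  have hR : {u | doubleStar.centerColoring a b u = 1}.ncard ≤ 2 := by
    rw [show {u | doubleStar.centerColoring a b u = 1} = {Sum.inr none} by
      ext ((_ | _) | (_ | _)) <;> simp [doubleStar.centerColoring]]
    simp
  refine ⟨fun u v h => ?_, fun w => ?_⟩
  · rcases u with (_ | _) | (_ | _) <;> rcases v with (_ | _) | (_ | _) <;>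
      simp_all [doubleStar, doubleStar.centerColoring]
  · rcases w with (_ | _) | (_ | _)
    · exact exists_dominated_colorClass_of_ncard_le_two (e := Sum.inr none) hR rfl (by simp)
    · exact exists_dominated_colorClass_of_ncard_le_two (e := Sum.inl none) hL rfl (by simp)
    · exact exists_dominated_colorClass_of_ncard_le_two (e := Sum.inl none) hL rfl
        (.inr doubleStar_adj_inl_none_inr_none.symm)
    · exact exists_dominated_colorClass_of_ncard_le_two (e := Sum.inr none) hR rfl (by simp)

end DoubleStar

theorem md_doubleStar_general (a b : ℕ) :
    (doubleStar a b).majorityDominatorChromaticNumber =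
      if 3 ≤ a ∧ 3 ≤ b then 3 else 2 := by
  split_ifs with h
  · exact majorityDominatorChromaticNumber_eq doubleStar_isMajorityDominatorColoring_centerColoring
      fun _ _ => doubleStar_three_le_of_isMajorityDominatorColoring h.1 h.2
  · exact majorityDominatorChromaticNumber_eq
      (doubleStar_isMajorityDominatorColoring_fin_two (by omega) doubleStar.sideColoring_ne_of_adj)
      fun _ _ hc => two_le_of_adj hc.1 doubleStar_adj_inl_none_inr_none

theorem md_doubleStar (a b : ℕ) (ha : 2 ≤ a) (hb : 2 ≤ b) :
    (doubleStar a b).majorityDominatorChromaticNumber =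
      if 3 ≤ a ∧ 3 ≤ b then 3 else 2 :=
  md_doubleStar_general a b
end

section
/- If n ≥ 11, then in any majority dominator coloring of the path P_n using the minimum number χ_md(P_n) of colors, at least two colors appear on at most two vertices each. -/
open SimpleGraph

/-
Suppose at most one color is small, i.e. used on at most two vertices. An end vertex of the path
has a single neighbour, so the class it half-dominates meets its closed neighbourhood in at most
one vertex and is therefore small; hence the only small class is `{a, b}` with `a` among the first
two and `b` among the last two vertices. A vertex `v` with both neighbours in `[2, n - 3]` cannot
half-dominate that class, so it half-dominates a class of size at least three; such a class
avoids `v` and so must contain both neighbours of `v`, which bounds its size by four. Thus the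
colors of `2` and `3` alternate along `[2, n - 3]`, the two leftover end vertices cannot form a
class of their own, and the path has at most `2 + 4 + 4` vertices.
-/

lemma Set.ncard_pair_le {α : Type*} (a b : α) : ({a, b} : Set α).ncard ≤ 2 :=
  (Set.ncard_insert_le a {b}).trans (by rw [Set.ncard_singleton])

namespace SimpleGraph

variable {V : Type*} {G : SimpleGraph V} {k : ℕ}

def IsSmallColorClass (c : V → Fin k) (i : Fin k) : Prop :=
  {u | c u = i}.Nonempty ∧ {u | c u = i}.ncard ≤ 2

variable [Finite V] {c : V → Fin k}

lemma IsSmallColorClass.colorClass_eq_pair {a b : V} (hs : IsSmallColorClass c (c a))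
    (hba : c b = c a) (hab : a ≠ b) : {u | c u = c a} = {a, b} :=
  (Set.eq_of_subset_of_ncard_le (by rintro u (rfl | rfl) <;> simp [hba])
    (by rw [Set.ncard_pair hab]; exact hs.2)).symm

lemma card_le_ncard_add_ncard_add_ncard {i j l : Fin k}
    (h : ∀ u, c u = i ∨ c u = j ∨ c u = l) :
    Nat.card V ≤ {u | c u = i}.ncard + {u | c u = j}.ncard + {u | c u = l}.ncard :=
  calc Nat.card V = (Set.univ : Set V).ncard := (Set.ncard_univ V).symm
    _ ≤ ({u | c u = i} ∪ {u | c u = j} ∪ {u | c u = l}).ncard :=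
      Set.ncard_le_ncard fun u _ ↦ by rcases h u with h | h | h <;> simp [h]
    _ ≤ {u | c u = i}.ncard + {u | c u = j}.ncard + {u | c u = l}.ncard :=
      (Set.ncard_union_le _ _).trans (Nat.add_le_add_right (Set.ncard_union_le _ _) _)

lemma IsMajorityDominatorColoring.exists_small_or_dominated_by_neighborSet
    (hc : G.IsMajorityDominatorColoring c) (v : V) :
    (∃ u, (u = v ∨ G.Adj v u) ∧ IsSmallColorClass c (c u)) ∨
      ∃ i, 2 < {u | c u = i}.ncard ∧
        {u | c u = i}.ncard ≤ 2 * {u | c u = i ∧ G.Adj v u}.ncard := by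
  obtain ⟨i, hne, hle⟩ := hc.2 v
  by_cases hsmall : {u | c u = i}.ncard ≤ 2
  · left
    obtain ⟨u, hui, hu⟩ : {u | c u = i ∧ (u = v ∨ G.Adj v u)}.Nonempty := by
      apply Set.nonempty_of_ncard_ne_zero
      have := (Set.ncard_pos (Set.toFinite _)).2 hne
      omega
    exact ⟨u, hu, hui ▸ ⟨hne, hsmall⟩⟩
  · right
    refine ⟨i, by omega, ?_⟩
    have hvi : c v ≠ i := by
      intro hvi
      have hsub : {u | c u = i ∧ (u = v ∨ G.Adj v u)} ⊆ {v} := by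
        rintro u ⟨hui, rfl | hvu⟩
        · rfl
        · exact absurd (hvi.trans hui.symm) (hc.1 v u hvu)
      have := Set.ncard_le_ncard hsub
      rw [Set.ncard_singleton] at this
      omega
    have hW : {u | c u = i ∧ (u = v ∨ G.Adj v u)} = {u | c u = i ∧ G.Adj v u} := by
      ext u
      constructor
      · rintro ⟨hui, rfl | hvu⟩
        exacts [absurd hui hvi, ⟨hui, hvu⟩]
      · exact fun ⟨hui, hvu⟩ ↦ ⟨hui, Or.inr hvu⟩
    rwa [hW] at hle

lemma IsMajorityDominatorColoring.exists_small_of_subsingleton_neighborSet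
    (hc : G.IsMajorityDominatorColoring c) {v : V} (hv : (G.neighborSet v).Subsingleton) :
    ∃ u, (u = v ∨ G.Adj v u) ∧ IsSmallColorClass c (c u) := by
  refine (hc.exists_small_or_dominated_by_neighborSet v).resolve_right ?_
  rintro ⟨i, hbig, hle⟩
  have : {u | c u = i ∧ G.Adj v u}.ncard ≤ 1 :=
    Set.ncard_le_one_iff_subsingleton.2 (hv.anti fun u hu ↦ hu.2)
  omega

variable {n : ℕ} {c : Fin n → Fin k}

lemma pathGraph_neighborSet_subsingleton {v : Fin n} (hv : v.val = 0 ∨ v.val + 1 = n) :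
    ((pathGraph n).neighborSet v).Subsingleton := by
  intro u hu w hw
  simp only [mem_neighborSet, pathGraph_adj] at hu hw
  exact Fin.ext (by omega)

lemma IsMajorityDominatorColoring.exists_small_near_start
    (hc : (pathGraph n).IsMajorityDominatorColoring c) (hn : 0 < n) :
    ∃ a : Fin n, a.val ≤ 1 ∧ IsSmallColorClass c (c a) := by
  obtain ⟨v, hv⟩ : ∃ v : Fin n, v.val = 0 := ⟨⟨0, hn⟩, rfl⟩
  obtain ⟨a, hva, ha⟩ := hc.exists_small_of_subsingleton_neighborSet
    (pathGraph_neighborSet_subsingleton (Or.inl hv))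
  refine ⟨a, ?_, ha⟩
  rcases hva with rfl | hva
  · omega
  · rw [pathGraph_adj] at hva; omega

lemma IsMajorityDominatorColoring.exists_small_near_end
    (hc : (pathGraph n).IsMajorityDominatorColoring c) (hn : 0 < n) :
    ∃ b : Fin n, n ≤ b.val + 2 ∧ IsSmallColorClass c (c b) := by
  obtain ⟨v, hv⟩ : ∃ v : Fin n, v.val + 1 = n := ⟨⟨n - 1, by omega⟩, by simp; omega⟩
  obtain ⟨b, hvb, hb⟩ := hc.exists_small_of_subsingleton_neighborSet
    (pathGraph_neighborSet_subsingleton (Or.inr hv))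
  refine ⟨b, ?_, hb⟩
  rcases hvb with rfl | hvb
  · omega
  · rw [pathGraph_adj] at hvb; omega

lemma IsMajorityDominatorColoring.pathGraph_exists_small_or_color_eq
    (hc : (pathGraph n).IsMajorityDominatorColoring c) {u v w : Fin n}
    (huv : u.val + 1 = v.val) (hvw : v.val + 1 = w.val) :
    (∃ x, (x = v ∨ (pathGraph n).Adj v x) ∧ IsSmallColorClass c (c x)) ∨
      (c u = c w ∧ {x | c x = c u}.ncard ≤ 4) := by
  refine (hc.exists_small_or_dominated_by_neighborSet v).imp_right ?_
  rintro ⟨i, hbig, hle⟩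
  have hsub : {x | c x = i ∧ (pathGraph n).Adj v x} ⊆ {u, w} := by
    rintro x ⟨-, hvx⟩
    rw [pathGraph_adj] at hvx
    rcases hvx with h | h
    · exact Or.inr (Fin.ext (by omega))
    · exact Or.inl (Fin.ext (by omega))
  have hpair := Set.ncard_pair_le u w
  have hdom := Set.ncard_le_ncard hsub
  have heq := Set.eq_of_subset_of_ncard_le hsub (by omega)
  have hu : u ∈ {x | c x = i ∧ (pathGraph n).Adj v x} := heq ▸ Set.mem_insert u {w}
  have hw : w ∈ {x | c x = i ∧ (pathGraph n).Adj v x} := heq ▸ Set.mem_insert_of_mem u rfl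
  exact ⟨hu.1.trans hw.1.symm, hu.1 ▸ by omega⟩

lemma IsMajorityDominatorColoring.pathGraph_color_eq_of_small_at_ends
    (hc : (pathGraph n).IsMajorityDominatorColoring c)
    (hends : ∀ x, IsSmallColorClass c (c x) → x.val ≤ 1 ∨ n ≤ x.val + 2)
    {u w : Fin n} (hu : 2 ≤ u.val) (huw : u.val + 2 = w.val) (hw : w.val + 3 ≤ n) :
    c u = c w ∧ {x | c x = c u}.ncard ≤ 4 := by
  obtain ⟨v, hv⟩ : ∃ v : Fin n, u.val + 1 = v.val := ⟨⟨u.val + 1, by omega⟩, rfl⟩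
  refine (hc.pathGraph_exists_small_or_color_eq hv (by omega)).resolve_left ?_
  rintro ⟨x, hvx, hx⟩
  have := hends x hx
  rcases hvx with rfl | hvx
  · omega
  · rw [pathGraph_adj] at hvx; omega

lemma IsMajorityDominatorColoring.pathGraph_color_eq_or_eq_of_small_at_ends
    (hc : (pathGraph n).IsMajorityDominatorColoring c)
    (hends : ∀ x, IsSmallColorClass c (c x) → x.val ≤ 1 ∨ n ≤ x.val + 2)
    {p q : Fin n} (hp : p.val = 2) (hq : q.val = 3) (u : Fin n) (hu : 2 ≤ u.val)
    (hun : u.val + 3 ≤ n) : c u = c p ∨ c u = c q := by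
  induction h : u.val using Nat.strong_induction_on generalizing u with
  | _ m ih =>
    rcases Nat.lt_or_ge m 4 with hm | hm
    · rcases (by omega : u.val = p.val ∨ u.val = q.val) with h' | h'
      · exact Or.inl (congrArg c (Fin.ext h'))
      · exact Or.inr (congrArg c (Fin.ext h'))
    · obtain ⟨t, ht⟩ : ∃ t : Fin n, t.val + 2 = u.val := ⟨⟨m - 2, by omega⟩, by simp; omega⟩
      rw [← (hc.pathGraph_color_eq_of_small_at_ends hends (by omega) ht hun).1]
      exact ih t.val (by omega) t (by omega) (by omega) rfl

lemma color_eq_or_mem_of_middle_mem {a b : Fin n}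
    (ha : a.val ≤ 1) (hb : n ≤ b.val + 2) (hba : c b = c a)
    (huniq : ∀ i, IsSmallColorClass c i → i = c a) {C : Set (Fin k)}
    (hmid : ∀ u : Fin n, 2 ≤ u.val → u.val + 3 ≤ n → c u ∈ C) (u : Fin n) :
    c u = c a ∨ c u ∈ C := by
  by_contra! h
  have hua : u.val ≠ a.val := fun hua ↦ h.1 (congrArg c (Fin.ext hua))
  have hsub : {x | c x = c u} ⊆ {⟨1 - a.val, by omega⟩, ⟨2 * n - 3 - b.val, by omega⟩} := by
    intro x hx
    have hxa : x.val ≠ a.val := fun hxa ↦ h.1 (hx.symm.trans (congrArg c (Fin.ext hxa)))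
    have hxb : x.val ≠ b.val := fun hxb ↦ h.1 (hx.symm.trans ((congrArg c (Fin.ext hxb)).trans hba))
    have hxC : ¬(2 ≤ x.val ∧ x.val + 3 ≤ n) := fun hx' ↦ h.2 (hx ▸ hmid x hx'.1 hx'.2)
    rcases (by omega : x.val = 1 - a.val ∨ x.val = 2 * n - 3 - b.val) with hx' | hx'
    · exact Or.inl (Fin.ext hx')
    · exact Or.inr (Fin.ext hx')
  exact h.1 (huniq _ ⟨⟨u, rfl⟩, (Set.ncard_le_ncard hsub).trans (Set.ncard_pair_le _ _)⟩)

end SimpleGraph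

theorem path_md_coloring_at_least_two_small_classes_general (n k : ℕ) (hn : 11 ≤ n)
    (c : Fin n → Fin k) (hc : (pathGraph n).IsMajorityDominatorColoring c) :
    2 ≤ {i : Fin k | {u | c u = i}.Nonempty ∧ {u | c u = i}.ncard ≤ 2}.ncard := by
  by_contra! h
  have huniq : {i | IsSmallColorClass c i}.Subsingleton :=
    Set.ncard_le_one_iff_subsingleton.1 (Nat.le_of_lt_succ h)
  obtain ⟨a, ha, hsa⟩ := hc.exists_small_near_start (by omega)
  obtain ⟨b, hb, hsb⟩ := hc.exists_small_near_end (by omega)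
  have hba : c b = c a := huniq hsb hsa
  have hends : ∀ x, IsSmallColorClass c (c x) → x.val ≤ 1 ∨ n ≤ x.val + 2 := by
    intro x hx
    have hx' : x ∈ {u | c u = c a} := huniq hx hsa
    rw [hsa.colorClass_eq_pair hba (Fin.ne_of_val_ne (by omega))] at hx'
    rcases hx' with rfl | rfl <;> omega
  let p : Fin n := ⟨2, by omega⟩
  let q : Fin n := ⟨3, by omega⟩
  have hcover := color_eq_or_mem_of_middle_mem (C := {c p, c q}) ha hb hba
    (fun i hi ↦ huniq hi hsa) (hc.pathGraph_color_eq_or_eq_of_small_at_ends hends rfl rfl)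
  have hp := (hc.pathGraph_color_eq_of_small_at_ends hends (u := p) (w := ⟨4, by omega⟩)
    le_rfl rfl (show 4 + 3 ≤ n by omega)).2
  have hq := (hc.pathGraph_color_eq_of_small_at_ends hends (u := q) (w := ⟨5, by omega⟩)
    (Nat.le_succ 2) rfl (show 5 + 3 ≤ n by omega)).2
  have hcard := card_le_ncard_add_ncard_add_ncard hcover
  rw [Nat.card_fin] at hcard
  have ha2 := hsa.2
  omega

theorem path_md_coloring_at_least_two_small_classes (n k : ℕ) (hn : 11 ≤ n)
    (hk : k = (pathGraph n).majorityDominatorChromaticNumber)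
    (c : Fin n → Fin k) (hc : (pathGraph n).IsMajorityDominatorColoring c) :
    2 ≤ {i : Fin k | {u | c u = i}.Nonempty ∧ {u | c u = i}.ncard ≤ 2}.ncard :=
  path_md_coloring_at_least_two_small_classes_general n k hn c hc
end
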